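/- arXiv:2311.15645 — 5 statements merged into one kernel-verified Lean document; each statement's English description precedes it below -/
import Mathlib

section
/- In a Pappian projective plane satisfying Fano's axiom, the three pairs of opposite sides of a complete quadrangle meet any line not passing through a vertex of the quadrangle in three pairs of points that are pairs of a single involution on that line. -/
open Matrix

noncomputable section

/-- A (homogeneous coordinate vector for a) point of, or a line of, the real
projective plane. -/
abbrev Pt (K : Type*) := Fin 3 → K

variable {K : Type*} [Field K]

/-- Determinant of three coordinate vectors. -/
def det3 (a b c : Pt K) : K := (Matrix.of ![a, b, c]).det

/-- Three points of the projective plane are collinear. -/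
def Collinear3 (a b c : Pt K) : Prop := det3 a b c = 0

/-- Incidence of a point and a line (both given in homogeneous coordinates). -/
def Incid (p l : Pt K) : Prop := p ⬝ᵥ l = 0

/-- The line through two points (as a homogeneous coordinate vector). -/
def lineThrough (p q : Pt K) : Pt K := crossProduct p q

/-- Two coordinate vectors represent the same projective point. -/
def ProjEq (p q : Pt K) : Prop := ∃ t : K, t ≠ 0 ∧ q = t • p

/-- A point lies on the conic given by a symmetric matrix. -/
def OnConic (M : Matrix (Fin 3) (Fin 3) K) (p : Pt K) : Prop := p ⬝ᵥ M.mulVec p = 0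

/-- The polar line of a point with respect to a conic. -/
def polarLine (M : Matrix (Fin 3) (Fin 3) K) (p : Pt K) : Pt K := M.mulVec p

/-- The Steiner correspondence with respect to two conics: the intersection of the
two polars of a point. -/
def steiner (M₁ M₂ : Matrix (Fin 3) (Fin 3) K) (p : Pt K) : Pt K :=
  crossProduct (M₁.mulVec p) (M₂.mulVec p)

/-- Three lines are concurrent. -/
def ConcurrentLines (l₁ l₂ l₃ : Pt K) : Prop :=
  ∃ p : Pt K, p ≠ 0 ∧ Incid p l₁ ∧ Incid p l₂ ∧ Incid p l₃

/-- The cross ratio of four collinear points, computed by projecting from an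
auxiliary point `O` not on their common line. -/
def crFrom (O p₁ p₂ p₃ p₄ : Pt K) : K :=
  (det3 O p₁ p₃ * det3 O p₂ p₄) / (det3 O p₂ p₃ * det3 O p₁ p₄)

/-- `{D₁, D₂, D₃}` is a self-polar triangle of the conic `M`. -/
def SelfPolar (M : Matrix (Fin 3) (Fin 3) K) (D₁ D₂ D₃ : Pt K) : Prop :=
  ProjEq (lineThrough D₂ D₃) (polarLine M D₁) ∧
  ProjEq (lineThrough D₁ D₃) (polarLine M D₂) ∧
  ProjEq (lineThrough D₁ D₂) (polarLine M D₃)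

/-- A nondegenerate conic: a symmetric matrix with nonzero determinant. -/
def NondegConic (M : Matrix (Fin 3) (Fin 3) K) : Prop := M.IsSymm ∧ M.det ≠ 0

/-- `(p₁,q₁), (p₂,q₂), (p₃,q₃)` are pairs of an involution on the line `m`:
there is a projectivity of `m` onto itself of order two interchanging each pair. -/
def InvolutionPairsOnLine (m p₁ q₁ p₂ q₂ p₃ q₃ : Pt K) : Prop :=
  ∃ T : Matrix (Fin 3) (Fin 3) K, T.det ≠ 0 ∧
    (∀ p : Pt K, p ≠ 0 → Incid p m → Incid (T.mulVec p) m) ∧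
    (∀ p : Pt K, p ≠ 0 → Incid p m → ProjEq p (T.mulVec (T.mulVec p))) ∧
    ProjEq q₁ (T.mulVec p₁) ∧ ProjEq q₂ (T.mulVec p₂) ∧ ProjEq q₃ (T.mulVec p₃)

/-- `(p₁,q₁), (p₂,q₂), (p₃,q₃)` are pairs of an involution on the conic `M`:
there is a projectivity of the conic onto itself of order two interchanging
each pair. -/
def InvolutionPairsOnConic (M : Matrix (Fin 3) (Fin 3) K)
    (p₁ q₁ p₂ q₂ p₃ q₃ : Pt K) : Prop :=
  ∃ T : Matrix (Fin 3) (Fin 3) K, T.det ≠ 0 ∧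
    (∀ p : Pt K, p ≠ 0 → OnConic M p → OnConic M (T.mulVec p)) ∧
    (∀ p : Pt K, p ≠ 0 → OnConic M p → ProjEq p (T.mulVec (T.mulVec p))) ∧
    ProjEq q₁ (T.mulVec p₁) ∧ ProjEq q₂ (T.mulVec p₂) ∧ ProjEq q₃ (T.mulVec p₃)


/-! ### Auxiliary lemmas for the proof -/

private lemma dpE (x y : Pt ℝ) : x ⬝ᵥ y = x 0*y 0 + x 1*y 1 + x 2*y 2 := by
  simp [dotProduct, Fin.sum_univ_three]

private lemma cpE0 (a b : Pt ℝ) : crossProduct a b 0 = a 1*b 2 - a 2*b 1 := by simp [cross_apply]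
private lemma cpE1 (a b : Pt ℝ) : crossProduct a b 1 = a 2*b 0 - a 0*b 2 := by simp [cross_apply]
private lemma cpE2 (a b : Pt ℝ) : crossProduct a b 2 = a 0*b 1 - a 1*b 0 := by simp [cross_apply]

private lemma det3E (a b c : Pt ℝ) : det3 a b c =
    a 0*b 1*c 2 - a 0*b 2*c 1 - a 1*b 0*c 2 + a 1*b 2*c 0 + a 2*b 0*c 1 - a 2*b 1*c 0 := by
  simp [det3, Matrix.det_fin_three]

private lemma tripU (u v m : Pt ℝ) : crossProduct v m ⬝ᵥ u = det3 u v m := by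
  simp only [dpE, cpE0, cpE1, cpE2, det3E]; ring
private lemma tripV (u v m : Pt ℝ) : crossProduct m u ⬝ᵥ v = det3 u v m := by
  simp only [dpE, cpE0, cpE1, cpE2, det3E]; ring
private lemma tripM (u v m : Pt ℝ) : crossProduct u v ⬝ᵥ m = det3 u v m := by
  simp only [dpE, cpE0, cpE1, cpE2, det3E]; ring
private lemma crossDotLeft (a b : Pt ℝ) : crossProduct a b ⬝ᵥ a = 0 := by
  simp only [dpE, cpE0, cpE1, cpE2]; ring
private lemma crossDotRight (a b : Pt ℝ) : crossProduct a b ⬝ᵥ b = 0 := by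
  simp only [dpE, cpE0, cpE1, cpE2]; ring
private lemma dotCrossLeft (a b : Pt ℝ) : a ⬝ᵥ crossProduct a b = 0 := by
  simp only [dpE, cpE0, cpE1, cpE2]; ring
private lemma dotCrossRight (a b : Pt ℝ) : b ⬝ᵥ crossProduct a b = 0 := by
  simp only [dpE, cpE0, cpE1, cpE2]; ring
private lemma det3_eq_dot (a b c : Pt ℝ) : det3 a b c = a ⬝ᵥ crossProduct b c := by
  simp only [dpE, cpE0, cpE1, cpE2, det3E]; ring

private lemma scalarL4 (u v m p : Pt ℝ) :
    (m ⬝ᵥ m) * (crossProduct u v ⬝ᵥ p)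
      = (crossProduct u v ⬝ᵥ m) * (p ⬝ᵥ m) + (u ⬝ᵥ m) * (crossProduct m v ⬝ᵥ p)
        - (v ⬝ᵥ m) * (crossProduct m u ⬝ᵥ p) := by
  simp only [dpE, cpE0, cpE1, cpE2]; ring

private lemma grass2 (X Y A B C D : Pt ℝ) :
    (X ⬝ᵥ crossProduct A D)*(Y ⬝ᵥ crossProduct B C)
      + (Y ⬝ᵥ crossProduct A D)*(X ⬝ᵥ crossProduct B C)
    = (X ⬝ᵥ crossProduct A C)*(Y ⬝ᵥ crossProduct B D)
      + (Y ⬝ᵥ crossProduct A C)*(X ⬝ᵥ crossProduct B D)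
      - (X ⬝ᵥ crossProduct A B)*(Y ⬝ᵥ crossProduct C D)
      - (Y ⬝ᵥ crossProduct A B)*(X ⬝ᵥ crossProduct C D) := by
  simp only [dpE, cpE0, cpE1, cpE2]; ring

private lemma aux1 (a x : Pt ℝ) :
    (a ⬝ᵥ a) • x = (x ⬝ᵥ a) • a + crossProduct a (crossProduct x a) := by
  funext i
  fin_cases i <;> simp only [Fin.zero_eta, Fin.mk_one, Fin.reduceFinMk] <;>
    simp only [Pi.add_apply, Pi.sub_apply, Pi.smul_apply, smul_eq_mul, dpE, cpE0, cpE1, cpE2] <;>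
    ring

private lemma aux2 (L L' x : Pt ℝ) :
    crossProduct (crossProduct L L') x = (x ⬝ᵥ L) • L' - (x ⬝ᵥ L') • L := by
  funext i
  fin_cases i <;> simp only [Fin.zero_eta, Fin.mk_one, Fin.reduceFinMk] <;>
    simp only [Pi.add_apply, Pi.sub_apply, Pi.smul_apply, smul_eq_mul, dpE, cpE0, cpE1, cpE2] <;>
    ring

private lemma cross_swap (a b : Pt ℝ) : crossProduct a b = - crossProduct b a := by
  funext i
  fin_cases i <;> simp only [Fin.zero_eta, Fin.mk_one, Fin.reduceFinMk] <;>
    simp only [Pi.neg_apply, cpE0, cpE1, cpE2] <;> ring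

private lemma cramer (u v m p : Pt ℝ) :
    det3 u v m • p = (crossProduct v m ⬝ᵥ p) • u + (crossProduct m u ⬝ᵥ p) • v
      + (crossProduct u v ⬝ᵥ p) • m := by
  funext i
  fin_cases i <;> simp only [Fin.zero_eta, Fin.mk_one, Fin.reduceFinMk] <;>
    simp only [Pi.add_apply, Pi.sub_apply, Pi.smul_apply, smul_eq_mul, dpE, cpE0, cpE1, cpE2,
      det3E] <;> ring

private lemma vecL4 (u v m : Pt ℝ) :
    (m ⬝ᵥ m) • crossProduct u v = (crossProduct u v ⬝ᵥ m) • m + (u ⬝ᵥ m) • crossProduct m v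
      - (v ⬝ᵥ m) • crossProduct m u := by
  funext i
  fin_cases i <;> simp only [Fin.zero_eta, Fin.mk_one, Fin.reduceFinMk] <;>
    simp only [Pi.add_apply, Pi.sub_apply, Pi.smul_apply, smul_eq_mul, dpE, cpE0, cpE1, cpE2] <;>
    ring

private lemma ccAB_AC (A B C : Pt ℝ) :
    crossProduct (crossProduct A B) (crossProduct A C) = det3 A B C • A := by
  funext i
  fin_cases i <;> simp only [Fin.zero_eta, Fin.mk_one, Fin.reduceFinMk] <;>
    simp only [Pi.smul_apply, smul_eq_mul, cpE0, cpE1, cpE2, det3E] <;> ring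

private lemma ccAB_BD (A B D : Pt ℝ) :
    crossProduct (crossProduct A B) (crossProduct B D) = det3 A B D • B := by
  funext i
  fin_cases i <;> simp only [Fin.zero_eta, Fin.mk_one, Fin.reduceFinMk] <;>
    simp only [Pi.smul_apply, smul_eq_mul, cpE0, cpE1, cpE2, det3E] <;> ring

private lemma ccAC_CD (A C D : Pt ℝ) :
    crossProduct (crossProduct A C) (crossProduct C D) = det3 A C D • C := by
  funext i
  fin_cases i <;> simp only [Fin.zero_eta, Fin.mk_one, Fin.reduceFinMk] <;>
    simp only [Pi.smul_apply, smul_eq_mul, cpE0, cpE1, cpE2, det3E] <;> ring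

private lemma ccAC_AD (A C D : Pt ℝ) :
    crossProduct (crossProduct A C) (crossProduct A D) = det3 A C D • A := by
  funext i
  fin_cases i <;> simp only [Fin.zero_eta, Fin.mk_one, Fin.reduceFinMk] <;>
    simp only [Pi.smul_apply, smul_eq_mul, cpE0, cpE1, cpE2, det3E] <;> ring

private lemma ccCD_BD (B C D : Pt ℝ) :
    crossProduct (crossProduct C D) (crossProduct B D) = (-det3 B C D) • D := by
  funext i
  fin_cases i <;> simp only [Fin.zero_eta, Fin.mk_one, Fin.reduceFinMk] <;>
    simp only [Pi.smul_apply, smul_eq_mul, cpE0, cpE1, cpE2, det3E] <;> ring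

private lemma dotSelf_ne {x : Pt ℝ} (hx : x ≠ 0) : x ⬝ᵥ x ≠ 0 := by
  rw [dpE]
  intro h
  apply hx
  funext i
  fin_cases i <;> simp only [Fin.zero_eta, Fin.mk_one, Fin.reduceFinMk, Pi.zero_apply] <;>
    nlinarith [sq_nonneg (x 0), sq_nonneg (x 1), sq_nonneg (x 2)]

private lemma para {L L' x : Pt ℝ} (hxL : x ⬝ᵥ L = 0) (hxL' : x ⬝ᵥ L' = 0)
    (hLL' : crossProduct L L' ≠ 0) :
    x = ((x ⬝ᵥ crossProduct L L') / (crossProduct L L' ⬝ᵥ crossProduct L L'))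
        • crossProduct L L' := by
  have hax : crossProduct (crossProduct L L') x = 0 := by
    rw [aux2, hxL, hxL', zero_smul, zero_smul, sub_zero]
  have hxa : crossProduct x (crossProduct L L') = 0 := by
    rw [cross_swap, hax, neg_zero]
  have h1 := aux1 (crossProduct L L') x
  rw [hxa, map_zero, add_zero] at h1
  have haa := dotSelf_ne hLL'
  calc x = (crossProduct L L' ⬝ᵥ crossProduct L L')⁻¹
            • ((crossProduct L L' ⬝ᵥ crossProduct L L') • x) := by
        rw [smul_smul, inv_mul_cancel₀ haa, one_smul]
    _ = _ := by rw [h1, smul_smul, div_eq_inv_mul]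

private lemma common (L L' x y : Pt ℝ) (hx : x ≠ 0) (hy : y ≠ 0)
    (hxL : x ⬝ᵥ L = 0) (hxL' : x ⬝ᵥ L' = 0) (hyL : y ⬝ᵥ L = 0) (hyL' : y ⬝ᵥ L' = 0)
    (hLL' : crossProduct L L' ≠ 0) : ∃ t : ℝ, t ≠ 0 ∧ x = t • y := by
  have haa := dotSelf_ne hLL'
  have hxa := para hxL hxL' hLL'
  have hya := para hyL hyL' hLL'
  have hxc : x ⬝ᵥ crossProduct L L' ≠ 0 := by
    intro h; apply hx; rw [hxa, h, zero_div, zero_smul]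
  have hyc : y ⬝ᵥ crossProduct L L' ≠ 0 := by
    intro h; apply hy; rw [hya, h, zero_div, zero_smul]
  have key : (y ⬝ᵥ crossProduct L L') • x = (x ⬝ᵥ crossProduct L L') • y := by
    conv_lhs => rw [hxa]
    conv_rhs => rw [hya]
    rw [smul_smul, smul_smul]
    congr 1
    ring
  refine ⟨(x ⬝ᵥ crossProduct L L') / (y ⬝ᵥ crossProduct L L'), div_ne_zero hxc hyc, ?_⟩
  have h2 := congrArg (fun z => (y ⬝ᵥ crossProduct L L')⁻¹ • z) key
  simp only [smul_smul, inv_mul_cancel₀ hyc, one_smul] at h2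
  rw [div_eq_inv_mul]
  exact h2

private lemma pointOnM {x y m : Pt ℝ} (hxm : x ⬝ᵥ m = 0) {t : ℝ} (ht : t ≠ 0)
    (h : x = t • y) : y ⬝ᵥ m = 0 := by
  rw [h, smul_dotProduct, smul_eq_mul] at hxm
  exact (mul_eq_zero.mp hxm).resolve_left ht

private lemma mcross {m L x : Pt ℝ} (hL : L ≠ 0) (hxL : x ⬝ᵥ L = 0) (hxm : x ⬝ᵥ m ≠ 0) :
    crossProduct m L ≠ 0 := by
  intro h
  have hm : m ≠ 0 := by intro h'; apply hxm; rw [h']; simp [dotProduct]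
  have hLm : crossProduct L m = 0 := by rw [cross_swap, h, neg_zero]
  have h1 := aux1 m L
  rw [hLm, map_zero, add_zero] at h1
  have h2 := congrArg (fun z => x ⬝ᵥ z) h1
  simp only [dotProduct_smul, smul_eq_mul, hxL, mul_zero] at h2
  have h3 : L ⬝ᵥ m = 0 := by
    rcases mul_eq_zero.mp h2.symm with h' | h'
    · exact h'
    · exact absurd h' hxm
  rw [h3, zero_smul] at h1
  rcases smul_eq_zero.mp h1 with h' | h'
  · exact dotSelf_ne hm h'
  · exact hL h'

private lemma vmv_mulVec (w r x : Pt ℝ) :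
    (Matrix.vecMulVec w r).mulVec x = (r ⬝ᵥ x) • w := by
  funext i
  simp only [Matrix.mulVec, Matrix.vecMulVec_apply, dotProduct, Fin.sum_univ_three,
    Pi.smul_apply, smul_eq_mul]
  ring

private lemma detT (u v m : Pt ℝ) (a b c : ℝ) :
    (Matrix.vecMulVec ((-b) • u + a • v) (crossProduct v m) +
     Matrix.vecMulVec ((-c) • u + b • v) (crossProduct m u) +
     Matrix.vecMulVec m (crossProduct u v)).det
    = (det3 u v m)^3 * (a*c - b*b) := by
  rw [Matrix.det_fin_three]
  simp only [Matrix.add_apply, Matrix.vecMulVec_apply, Pi.add_apply, Pi.smul_apply,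
    smul_eq_mul, cpE0, cpE1, cpE2, det3E]
  ring

set_option maxHeartbeats 2000000 in
/-- **The complete quadrangle involution theorem** (formalized over the real
projective plane, a Pappian plane satisfying Fano's axiom): the three pairs of
opposite sides of a complete quadrangle `ABCD` meet any line not passing through
a vertex in three pairs of points that are pairs of a single involution on that
line.  Here the pairs of opposite sides are `(AB, CD)`, `(AC, BD)`, `(AD, BC)`,
meeting the line `m` at `(P₁, Q₁)`, `(P₂, Q₂)`, `(P₃, Q₃)` respectively. -/

theorem stmt2 (A B C D : Pt ℝ)
    (hA : A ≠ 0) (hB : B ≠ 0) (hC : C ≠ 0) (hD : D ≠ 0)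
    -- no three of the four vertices are collinear
    (h1 : ¬ Collinear3 A B C) (h2 : ¬ Collinear3 A B D)
    (h3 : ¬ Collinear3 A C D) (h4 : ¬ Collinear3 B C D)
    -- a line not passing through any vertex
    (m : Pt ℝ) (hm : m ≠ 0)
    (hmA : ¬ Incid A m) (hmB : ¬ Incid B m) (hmC : ¬ Incid C m) (hmD : ¬ Incid D m)
    -- the intersections of the three pairs of opposite sides with `m`
    (P₁ Q₁ P₂ Q₂ P₃ Q₃ : Pt ℝ)
    (hP₁ : P₁ ≠ 0) (hQ₁ : Q₁ ≠ 0) (hP₂ : P₂ ≠ 0) (hQ₂ : Q₂ ≠ 0)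
    (hP₃ : P₃ ≠ 0) (hQ₃ : Q₃ ≠ 0)
    (hP₁m : Incid P₁ m) (hP₁l : Incid P₁ (lineThrough A B))
    (hQ₁m : Incid Q₁ m) (hQ₁l : Incid Q₁ (lineThrough C D))
    (hP₂m : Incid P₂ m) (hP₂l : Incid P₂ (lineThrough A C))
    (hQ₂m : Incid Q₂ m) (hQ₂l : Incid Q₂ (lineThrough B D))
    (hP₃m : Incid P₃ m) (hP₃l : Incid P₃ (lineThrough A D))
    (hQ₃m : Incid Q₃ m) (hQ₃l : Incid Q₃ (lineThrough B C)) :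
    InvolutionPairsOnLine m P₁ Q₁ P₂ Q₂ P₃ Q₃ := by
  
  classical
  have hP₁l' : P₁ ⬝ᵥ crossProduct A B = 0 := hP₁l
  have hQ₁l' : Q₁ ⬝ᵥ crossProduct C D = 0 := hQ₁l
  have hP₂l' : P₂ ⬝ᵥ crossProduct A C = 0 := hP₂l
  have hQ₂l' : Q₂ ⬝ᵥ crossProduct B D = 0 := hQ₂l
  have hP₃l' : P₃ ⬝ᵥ crossProduct A D = 0 := hP₃l
  have hQ₃l' : Q₃ ⬝ᵥ crossProduct B C = 0 := hQ₃l
  have hP₁m' : P₁ ⬝ᵥ m = 0 := hP₁m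
  have hP₂m' : P₂ ⬝ᵥ m = 0 := hP₂m
  have hP₃m' : P₃ ⬝ᵥ m = 0 := hP₃m
  have hQ₁m' : Q₁ ⬝ᵥ m = 0 := hQ₁m
  have hQ₂m' : Q₂ ⬝ᵥ m = 0 := hQ₂m
  have hQ₃m' : Q₃ ⬝ᵥ m = 0 := hQ₃m
  have hmA' : A ⬝ᵥ m ≠ 0 := hmA
  have hmB' : B ⬝ᵥ m ≠ 0 := hmB
  have hmC' : C ⬝ᵥ m ≠ 0 := hmC
  have hmD' : D ⬝ᵥ m ≠ 0 := hmD
  have hd1 : det3 A B C ≠ 0 := h1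
  have hd2 : det3 A B D ≠ 0 := h2
  have hd3 : det3 A C D ≠ 0 := h3
  have hd4 : det3 B C D ≠ 0 := h4
  have hmm0 : m ⬝ᵥ m ≠ 0 := dotSelf_ne hm
  -- nondegeneracy of various scalars
  have hα₃ : (P₁ ⬝ᵥ crossProduct A C) ≠ 0 := by
    intro h0
    obtain ⟨t, ht, hPA⟩ := common (crossProduct A B) (crossProduct A C) P₁ A hP₁ hA
      hP₁l' h0 (dotCrossLeft A B) (dotCrossLeft A C)
      (by rw [ccAB_AC]; exact smul_ne_zero hd1 hA)
    exact hmA' (pointOnM hP₁m' ht hPA)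
  have hβ₁ : (P₂ ⬝ᵥ crossProduct A B) ≠ 0 := by
    intro h0
    obtain ⟨t, ht, hPA⟩ := common (crossProduct A B) (crossProduct A C) P₂ A hP₂ hA
      h0 hP₂l' (dotCrossLeft A B) (dotCrossLeft A C)
      (by rw [ccAB_AC]; exact smul_ne_zero hd1 hA)
    exact hmA' (pointOnM hP₂m' ht hPA)
  have hα₄ : (P₁ ⬝ᵥ crossProduct B D) ≠ 0 := by
    intro h0
    obtain ⟨t, ht, hPB⟩ := common (crossProduct A B) (crossProduct B D) P₁ B hP₁ hB
      hP₁l' h0 (dotCrossRight A B) (dotCrossLeft B D)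
      (by rw [ccAB_BD]; exact smul_ne_zero hd2 hB)
    exact hmB' (pointOnM hP₁m' ht hPB)
  have hβ₂ : (P₂ ⬝ᵥ crossProduct C D) ≠ 0 := by
    intro h0
    obtain ⟨t, ht, hPC⟩ := common (crossProduct A C) (crossProduct C D) P₂ C hP₂ hC
      hP₂l' h0 (dotCrossRight A C) (dotCrossLeft C D)
      (by rw [ccAC_CD]; exact smul_ne_zero hd3 hC)
    exact hmC' (pointOnM hP₂m' ht hPC)
  have hβ₅ : (P₂ ⬝ᵥ crossProduct A D) ≠ 0 := by
    intro h0
    obtain ⟨t, ht, hPA⟩ := common (crossProduct A C) (crossProduct A D) P₂ A hP₂ hA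
      hP₂l' h0 (dotCrossLeft A C) (dotCrossLeft A D)
      (by rw [ccAC_AD]; exact smul_ne_zero hd3 hA)
    exact hmA' (pointOnM hP₂m' ht hPA)
  -- properties of the auxiliary point Z1
  have hZ1m : ((P₁ ⬝ᵥ crossProduct C D) • P₂ - (P₂ ⬝ᵥ crossProduct C D) • P₁) ⬝ᵥ m = 0 := by
    simp only [sub_dotProduct, smul_dotProduct, smul_eq_mul, hP₁m', hP₂m']; ring
  have hZ1L : ((P₁ ⬝ᵥ crossProduct C D) • P₂ - (P₂ ⬝ᵥ crossProduct C D) • P₁) ⬝ᵥ crossProduct C D = 0 := by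
    simp only [sub_dotProduct, smul_dotProduct, smul_eq_mul]; ring
  have hZ1ne : ((P₁ ⬝ᵥ crossProduct C D) • P₂ - (P₂ ⬝ᵥ crossProduct C D) • P₁) ≠ 0 := by
    intro h0
    have h := congrArg (fun z => z ⬝ᵥ crossProduct A C) h0
    simp only [sub_dotProduct, smul_dotProduct, smul_eq_mul, zero_dotProduct, hP₂l',
      mul_zero] at h
    have hb : (P₂ ⬝ᵥ crossProduct C D) * (P₁ ⬝ᵥ crossProduct A C) = 0 := by linarith
    rcases mul_eq_zero.mp hb with h' | h'
    · exact hβ₂ h'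
    · exact hα₃ h'
  have hD4 : (P₁ ⬝ᵥ crossProduct C D) * (P₂ ⬝ᵥ crossProduct B D) - (P₁ ⬝ᵥ crossProduct B D) * (P₂ ⬝ᵥ crossProduct C D) ≠ 0 := by
    intro h0
    have hZ1L4 : ((P₁ ⬝ᵥ crossProduct C D) • P₂ - (P₂ ⬝ᵥ crossProduct C D) • P₁) ⬝ᵥ crossProduct B D = 0 := by
      simp only [sub_dotProduct, smul_dotProduct, smul_eq_mul]
      linarith [h0]
    obtain ⟨t, ht, hZD⟩ := common (crossProduct C D) (crossProduct B D) ((P₁ ⬝ᵥ crossProduct C D) • P₂ - (P₂ ⬝ᵥ crossProduct C D) • P₁) D hZ1ne hD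
      hZ1L hZ1L4 (dotCrossRight C D) (dotCrossRight B D)
      (by rw [ccCD_BD]; exact smul_ne_zero (neg_ne_zero.mpr hd4) hD)
    exact hmD' (pointOnM hZ1m ht hZD)
  -- P₁, P₂, m form a triangle
  have hΔ : (det3 P₁ P₂ m) ≠ 0 := by
    intro h0
    have h1 := vecL4 P₁ P₂ m
    rw [tripM, h0, zero_smul, hP₁m', hP₂m', zero_smul, zero_smul, add_zero, sub_zero] at h1
    have h2 : crossProduct P₁ P₂ = 0 := by
      rcases smul_eq_zero.mp h1 with h' | h'
      · exact absurd h' hmm0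
      · exact h'
    have hc : crossProduct P₂ P₁ = 0 := by rw [cross_swap, h2, neg_zero]
    have h3 := aux1 P₁ P₂
    rw [hc, map_zero, add_zero] at h3
    have h4 := congrArg (fun z => z ⬝ᵥ crossProduct A C) h3
    simp only [smul_dotProduct, smul_eq_mul, hP₂l', mul_zero] at h4
    have h5 : P₂ ⬝ᵥ P₁ = 0 := (mul_eq_zero.mp h4.symm).resolve_right hα₃
    rw [h5, zero_smul] at h3
    rcases smul_eq_zero.mp h3 with h' | h'
    · exact dotSelf_ne hP₁ h'
    · exact hP₂ h'
  -- the matrix of the involution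
  have hTmul : ∀ x : Pt ℝ, ((Matrix.vecMulVec ((-((P₁ ⬝ᵥ crossProduct B D)*(P₂ ⬝ᵥ crossProduct C D))) • P₁ + ((P₁ ⬝ᵥ crossProduct C D)*(P₁ ⬝ᵥ crossProduct B D)) • P₂) (crossProduct P₂ m) + Matrix.vecMulVec ((-((P₂ ⬝ᵥ crossProduct C D)*(P₂ ⬝ᵥ crossProduct B D))) • P₁ + ((P₁ ⬝ᵥ crossProduct B D)*(P₂ ⬝ᵥ crossProduct C D)) • P₂) (crossProduct m P₁) + Matrix.vecMulVec m (crossProduct P₁ P₂))).mulVec x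
      = (crossProduct P₂ m ⬝ᵥ x) • ((-((P₁ ⬝ᵥ crossProduct B D)*(P₂ ⬝ᵥ crossProduct C D))) • P₁ + ((P₁ ⬝ᵥ crossProduct C D)*(P₁ ⬝ᵥ crossProduct B D)) • P₂) + (crossProduct m P₁ ⬝ᵥ x) • ((-((P₂ ⬝ᵥ crossProduct C D)*(P₂ ⬝ᵥ crossProduct B D))) • P₁ + ((P₁ ⬝ᵥ crossProduct B D)*(P₂ ⬝ᵥ crossProduct C D)) • P₂)
        + (crossProduct P₁ P₂ ⬝ᵥ x) • m := by
    intro x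
    rw [Matrix.add_mulVec, Matrix.add_mulVec, vmv_mulVec, vmv_mulVec, vmv_mulVec]
  have hzlem : ∀ p : Pt ℝ, p ⬝ᵥ m = 0 → crossProduct P₁ P₂ ⬝ᵥ p = 0 := by
    intro p hpm
    have h := scalarL4 P₁ P₂ m p
    simp only [hpm, hP₁m', hP₂m', mul_zero, zero_mul, add_zero, zero_add, sub_zero] at h
    exact (mul_eq_zero.mp h).resolve_left hmm0
  have hW1m : ((-((P₁ ⬝ᵥ crossProduct B D)*(P₂ ⬝ᵥ crossProduct C D))) • P₁ + ((P₁ ⬝ᵥ crossProduct C D)*(P₁ ⬝ᵥ crossProduct B D)) • P₂) ⬝ᵥ m = 0 := by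
    simp only [add_dotProduct, smul_dotProduct, smul_eq_mul, hP₁m', hP₂m']; ring
  have hW2m : ((-((P₂ ⬝ᵥ crossProduct C D)*(P₂ ⬝ᵥ crossProduct B D))) • P₁ + ((P₁ ⬝ᵥ crossProduct B D)*(P₂ ⬝ᵥ crossProduct C D)) • P₂) ⬝ᵥ m = 0 := by
    simp only [add_dotProduct, smul_dotProduct, smul_eq_mul, hP₁m', hP₂m']; ring
  have hmapm : ∀ p : Pt ℝ, p ⬝ᵥ m = 0 → (((Matrix.vecMulVec ((-((P₁ ⬝ᵥ crossProduct B D)*(P₂ ⬝ᵥ crossProduct C D))) • P₁ + ((P₁ ⬝ᵥ crossProduct C D)*(P₁ ⬝ᵥ crossProduct B D)) • P₂) (crossProduct P₂ m) + Matrix.vecMulVec ((-((P₂ ⬝ᵥ crossProduct C D)*(P₂ ⬝ᵥ crossProduct B D))) • P₁ + ((P₁ ⬝ᵥ crossProduct B D)*(P₂ ⬝ᵥ crossProduct C D)) • P₂) (crossProduct m P₁) + Matrix.vecMulVec m (crossProduct P₁ P₂))).mulVec p) ⬝ᵥ m = 0 := by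
    intro p hpm
    rw [hTmul p, add_dotProduct, add_dotProduct, smul_dotProduct, smul_dotProduct,
      smul_dotProduct, hW1m, hW2m, hzlem p hpm]
    simp
  have hdetT : ((Matrix.vecMulVec ((-((P₁ ⬝ᵥ crossProduct B D)*(P₂ ⬝ᵥ crossProduct C D))) • P₁ + ((P₁ ⬝ᵥ crossProduct C D)*(P₁ ⬝ᵥ crossProduct B D)) • P₂) (crossProduct P₂ m) + Matrix.vecMulVec ((-((P₂ ⬝ᵥ crossProduct C D)*(P₂ ⬝ᵥ crossProduct B D))) • P₁ + ((P₁ ⬝ᵥ crossProduct B D)*(P₂ ⬝ᵥ crossProduct C D)) • P₂) (crossProduct m P₁) + Matrix.vecMulVec m (crossProduct P₁ P₂))).det = ((det3 P₁ P₂ m))^3 * (((P₁ ⬝ᵥ crossProduct C D)*(P₁ ⬝ᵥ crossProduct B D))*((P₂ ⬝ᵥ crossProduct C D)*(P₂ ⬝ᵥ crossProduct B D)) - ((P₁ ⬝ᵥ crossProduct B D)*(P₂ ⬝ᵥ crossProduct C D))*((P₁ ⬝ᵥ crossProduct B D)*(P₂ ⬝ᵥ crossProduct C D))) :=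
    detT P₁ P₂ m ((P₁ ⬝ᵥ crossProduct C D)*(P₁ ⬝ᵥ crossProduct B D)) ((P₁ ⬝ᵥ crossProduct B D)*(P₂ ⬝ᵥ crossProduct C D)) ((P₂ ⬝ᵥ crossProduct C D)*(P₂ ⬝ᵥ crossProduct B D))
  have hdetne : ((Matrix.vecMulVec ((-((P₁ ⬝ᵥ crossProduct B D)*(P₂ ⬝ᵥ crossProduct C D))) • P₁ + ((P₁ ⬝ᵥ crossProduct C D)*(P₁ ⬝ᵥ crossProduct B D)) • P₂) (crossProduct P₂ m) + Matrix.vecMulVec ((-((P₂ ⬝ᵥ crossProduct C D)*(P₂ ⬝ᵥ crossProduct B D))) • P₁ + ((P₁ ⬝ᵥ crossProduct B D)*(P₂ ⬝ᵥ crossProduct C D)) • P₂) (crossProduct m P₁) + Matrix.vecMulVec m (crossProduct P₁ P₂))).det ≠ 0 := by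
    rw [hdetT, show ((P₁ ⬝ᵥ crossProduct C D)*(P₁ ⬝ᵥ crossProduct B D))*((P₂ ⬝ᵥ crossProduct C D)*(P₂ ⬝ᵥ crossProduct B D)) - ((P₁ ⬝ᵥ crossProduct B D)*(P₂ ⬝ᵥ crossProduct C D))*((P₁ ⬝ᵥ crossProduct B D)*(P₂ ⬝ᵥ crossProduct C D))
        = ((P₁ ⬝ᵥ crossProduct B D)*(P₂ ⬝ᵥ crossProduct C D))*((P₁ ⬝ᵥ crossProduct C D)*(P₂ ⬝ᵥ crossProduct B D) - (P₁ ⬝ᵥ crossProduct B D)*(P₂ ⬝ᵥ crossProduct C D)) from by ring]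
    exact mul_ne_zero (pow_ne_zero 3 hΔ) (mul_ne_zero (mul_ne_zero hα₄ hβ₂) hD4)
  -- dot products of the two cross-lines with W1, W2
  have e11 : crossProduct P₂ m ⬝ᵥ ((-((P₁ ⬝ᵥ crossProduct B D)*(P₂ ⬝ᵥ crossProduct C D))) • P₁ + ((P₁ ⬝ᵥ crossProduct C D)*(P₁ ⬝ᵥ crossProduct B D)) • P₂) = (-((P₁ ⬝ᵥ crossProduct B D)*(P₂ ⬝ᵥ crossProduct C D))) * (det3 P₁ P₂ m) := by
    simp only [dotProduct_add, dotProduct_smul, smul_eq_mul, tripU P₁ P₂ m, crossDotLeft,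
      crossDotRight]
    ring
  have e12 : crossProduct P₂ m ⬝ᵥ ((-((P₂ ⬝ᵥ crossProduct C D)*(P₂ ⬝ᵥ crossProduct B D))) • P₁ + ((P₁ ⬝ᵥ crossProduct B D)*(P₂ ⬝ᵥ crossProduct C D)) • P₂) = (-((P₂ ⬝ᵥ crossProduct C D)*(P₂ ⬝ᵥ crossProduct B D))) * (det3 P₁ P₂ m) := by
    simp only [dotProduct_add, dotProduct_smul, smul_eq_mul, tripU P₁ P₂ m, crossDotLeft,
      crossDotRight]
    ring
  have e21 : crossProduct m P₁ ⬝ᵥ ((-((P₁ ⬝ᵥ crossProduct B D)*(P₂ ⬝ᵥ crossProduct C D))) • P₁ + ((P₁ ⬝ᵥ crossProduct C D)*(P₁ ⬝ᵥ crossProduct B D)) • P₂) = ((P₁ ⬝ᵥ crossProduct C D)*(P₁ ⬝ᵥ crossProduct B D)) * (det3 P₁ P₂ m) := by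
    simp only [dotProduct_add, dotProduct_smul, smul_eq_mul, tripV P₁ P₂ m, crossDotLeft,
      crossDotRight]
    ring
  have e22 : crossProduct m P₁ ⬝ᵥ ((-((P₂ ⬝ᵥ crossProduct C D)*(P₂ ⬝ᵥ crossProduct B D))) • P₁ + ((P₁ ⬝ᵥ crossProduct B D)*(P₂ ⬝ᵥ crossProduct C D)) • P₂) = ((P₁ ⬝ᵥ crossProduct B D)*(P₂ ⬝ᵥ crossProduct C D)) * (det3 P₁ P₂ m) := by
    simp only [dotProduct_add, dotProduct_smul, smul_eq_mul, tripV P₁ P₂ m, crossDotLeft,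
      crossDotRight]
    ring
  have ez1 : crossProduct P₁ P₂ ⬝ᵥ ((-((P₁ ⬝ᵥ crossProduct B D)*(P₂ ⬝ᵥ crossProduct C D))) • P₁ + ((P₁ ⬝ᵥ crossProduct C D)*(P₁ ⬝ᵥ crossProduct B D)) • P₂) = 0 := by
    simp only [dotProduct_add, dotProduct_smul, smul_eq_mul, crossDotLeft, crossDotRight]
    ring
  have ez2 : crossProduct P₁ P₂ ⬝ᵥ ((-((P₂ ⬝ᵥ crossProduct C D)*(P₂ ⬝ᵥ crossProduct B D))) • P₁ + ((P₁ ⬝ᵥ crossProduct B D)*(P₂ ⬝ᵥ crossProduct C D)) • P₂) = 0 := by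
    simp only [dotProduct_add, dotProduct_smul, smul_eq_mul, crossDotLeft, crossDotRight]
    ring
  refine ⟨(Matrix.vecMulVec ((-((P₁ ⬝ᵥ crossProduct B D)*(P₂ ⬝ᵥ crossProduct C D))) • P₁ + ((P₁ ⬝ᵥ crossProduct C D)*(P₁ ⬝ᵥ crossProduct B D)) • P₂) (crossProduct P₂ m) + Matrix.vecMulVec ((-((P₂ ⬝ᵥ crossProduct C D)*(P₂ ⬝ᵥ crossProduct B D))) • P₁ + ((P₁ ⬝ᵥ crossProduct B D)*(P₂ ⬝ᵥ crossProduct C D)) • P₂) (crossProduct m P₁) + Matrix.vecMulVec m (crossProduct P₁ P₂)), hdetne, ?_, ?_, ?_, ?_, ?_⟩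
  · -- maps the line to itself
    intro p _ hpm
    exact hmapm p hpm
  · -- is an involution on the line
    intro p _ hpm
    have hpm' : p ⬝ᵥ m = 0 := hpm
    have hTp : ((Matrix.vecMulVec ((-((P₁ ⬝ᵥ crossProduct B D)*(P₂ ⬝ᵥ crossProduct C D))) • P₁ + ((P₁ ⬝ᵥ crossProduct C D)*(P₁ ⬝ᵥ crossProduct B D)) • P₂) (crossProduct P₂ m) + Matrix.vecMulVec ((-((P₂ ⬝ᵥ crossProduct C D)*(P₂ ⬝ᵥ crossProduct B D))) • P₁ + ((P₁ ⬝ᵥ crossProduct B D)*(P₂ ⬝ᵥ crossProduct C D)) • P₂) (crossProduct m P₁) + Matrix.vecMulVec m (crossProduct P₁ P₂))).mulVec p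
        = (crossProduct P₂ m ⬝ᵥ p) • ((-((P₁ ⬝ᵥ crossProduct B D)*(P₂ ⬝ᵥ crossProduct C D))) • P₁ + ((P₁ ⬝ᵥ crossProduct C D)*(P₁ ⬝ᵥ crossProduct B D)) • P₂) + (crossProduct m P₁ ⬝ᵥ p) • ((-((P₂ ⬝ᵥ crossProduct C D)*(P₂ ⬝ᵥ crossProduct B D))) • P₁ + ((P₁ ⬝ᵥ crossProduct B D)*(P₂ ⬝ᵥ crossProduct C D)) • P₂) := by
      rw [hTmul p, hzlem p hpm', zero_smul, add_zero]
    have hcram := cramer P₁ P₂ m p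
    rw [hzlem p hpm', zero_smul, add_zero] at hcram
    refine ⟨((det3 P₁ P₂ m))^2 * (((P₁ ⬝ᵥ crossProduct B D)*(P₂ ⬝ᵥ crossProduct C D))*((P₁ ⬝ᵥ crossProduct B D)*(P₂ ⬝ᵥ crossProduct C D)) - ((P₁ ⬝ᵥ crossProduct C D)*(P₁ ⬝ᵥ crossProduct B D))*((P₂ ⬝ᵥ crossProduct C D)*(P₂ ⬝ᵥ crossProduct B D))), ?_, ?_⟩
    · rw [show ((P₁ ⬝ᵥ crossProduct B D)*(P₂ ⬝ᵥ crossProduct C D))*((P₁ ⬝ᵥ crossProduct B D)*(P₂ ⬝ᵥ crossProduct C D)) - ((P₁ ⬝ᵥ crossProduct C D)*(P₁ ⬝ᵥ crossProduct B D))*((P₂ ⬝ᵥ crossProduct C D)*(P₂ ⬝ᵥ crossProduct B D))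
          = (-((P₁ ⬝ᵥ crossProduct B D)*(P₂ ⬝ᵥ crossProduct C D)))*((P₁ ⬝ᵥ crossProduct C D)*(P₂ ⬝ᵥ crossProduct B D) - (P₁ ⬝ᵥ crossProduct B D)*(P₂ ⬝ᵥ crossProduct C D)) from by ring]
      exact mul_ne_zero (pow_ne_zero 2 hΔ)
        (mul_ne_zero (neg_ne_zero.mpr (mul_ne_zero hα₄ hβ₂)) hD4)
    · apply smul_right_injective (Pt ℝ) hΔ
      show (det3 P₁ P₂ m) • _ = (det3 P₁ P₂ m) • _
      rw [hTp, hTmul]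
      simp only [dotProduct_add, dotProduct_smul, smul_eq_mul, e11, e12, e21, e22, ez1, ez2,
        mul_zero, add_zero, zero_smul]
      rw [smul_comm (det3 P₁ P₂ m)
        (((det3 P₁ P₂ m))^2 * (((P₁ ⬝ᵥ crossProduct B D)*(P₂ ⬝ᵥ crossProduct C D))*((P₁ ⬝ᵥ crossProduct B D)*(P₂ ⬝ᵥ crossProduct C D)) - ((P₁ ⬝ᵥ crossProduct C D)*(P₁ ⬝ᵥ crossProduct B D))*((P₂ ⬝ᵥ crossProduct C D)*(P₂ ⬝ᵥ crossProduct B D)))) p, hcram]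
      module
  · -- first pair
    have hTP1 : ((Matrix.vecMulVec ((-((P₁ ⬝ᵥ crossProduct B D)*(P₂ ⬝ᵥ crossProduct C D))) • P₁ + ((P₁ ⬝ᵥ crossProduct C D)*(P₁ ⬝ᵥ crossProduct B D)) • P₂) (crossProduct P₂ m) + Matrix.vecMulVec ((-((P₂ ⬝ᵥ crossProduct C D)*(P₂ ⬝ᵥ crossProduct B D))) • P₁ + ((P₁ ⬝ᵥ crossProduct B D)*(P₂ ⬝ᵥ crossProduct C D)) • P₂) (crossProduct m P₁) + Matrix.vecMulVec m (crossProduct P₁ P₂))).mulVec P₁ = (det3 P₁ P₂ m) • ((-((P₁ ⬝ᵥ crossProduct B D)*(P₂ ⬝ᵥ crossProduct C D))) • P₁ + ((P₁ ⬝ᵥ crossProduct C D)*(P₁ ⬝ᵥ crossProduct B D)) • P₂) := by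
      rw [hTmul P₁]
      simp only [tripU P₁ P₂ m, crossDotLeft, crossDotRight, zero_smul, add_zero]
    obtain ⟨s, hs, hZQ⟩ := common m (crossProduct C D) ((P₁ ⬝ᵥ crossProduct C D) • P₂ - (P₂ ⬝ᵥ crossProduct C D) • P₁) Q₁ hZ1ne hQ₁ hZ1m hZ1L
      hQ₁m' hQ₁l' (mcross (fun h => hd3 (by rw [det3_eq_dot, h, dotProduct_zero]))
        (dotCrossLeft C D) hmC')
    refine ⟨(det3 P₁ P₂ m) * (P₁ ⬝ᵥ crossProduct B D) * s, mul_ne_zero (mul_ne_zero hΔ hα₄) hs, ?_⟩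
    rw [hTP1, show ((-((P₁ ⬝ᵥ crossProduct B D)*(P₂ ⬝ᵥ crossProduct C D))) • P₁ + ((P₁ ⬝ᵥ crossProduct C D)*(P₁ ⬝ᵥ crossProduct B D)) • P₂) = (P₁ ⬝ᵥ crossProduct B D) • ((P₁ ⬝ᵥ crossProduct C D) • P₂ - (P₂ ⬝ᵥ crossProduct C D) • P₁) from by module, hZQ]
    module
  · -- second pair
    have hTP2 : ((Matrix.vecMulVec ((-((P₁ ⬝ᵥ crossProduct B D)*(P₂ ⬝ᵥ crossProduct C D))) • P₁ + ((P₁ ⬝ᵥ crossProduct C D)*(P₁ ⬝ᵥ crossProduct B D)) • P₂) (crossProduct P₂ m) + Matrix.vecMulVec ((-((P₂ ⬝ᵥ crossProduct C D)*(P₂ ⬝ᵥ crossProduct B D))) • P₁ + ((P₁ ⬝ᵥ crossProduct B D)*(P₂ ⬝ᵥ crossProduct C D)) • P₂) (crossProduct m P₁) + Matrix.vecMulVec m (crossProduct P₁ P₂))).mulVec P₂ = (det3 P₁ P₂ m) • ((-((P₂ ⬝ᵥ crossProduct C D)*(P₂ ⬝ᵥ crossProduct B D))) • P₁ + ((P₁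 ⬝ᵥ crossProduct B D)*(P₂ ⬝ᵥ crossProduct C D)) • P₂) := by
      rw [hTmul P₂]
      simp only [tripV P₁ P₂ m, crossDotLeft, crossDotRight, zero_smul, add_zero, zero_add]
    have hZ2m : ((P₁ ⬝ᵥ crossProduct B D) • P₂ - (P₂ ⬝ᵥ crossProduct B D) • P₁) ⬝ᵥ m = 0 := by
      simp only [sub_dotProduct, smul_dotProduct, smul_eq_mul, hP₁m', hP₂m']; ring
    have hZ2L : ((P₁ ⬝ᵥ crossProduct B D) • P₂ - (P₂ ⬝ᵥ crossProduct B D) • P₁) ⬝ᵥ crossProduct B D = 0 := by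
      simp only [sub_dotProduct, smul_dotProduct, smul_eq_mul]; ring
    have hZ2ne : ((P₁ ⬝ᵥ crossProduct B D) • P₂ - (P₂ ⬝ᵥ crossProduct B D) • P₁) ≠ 0 := by
      intro h0
      have h := congrArg (fun z => z ⬝ᵥ crossProduct A B) h0
      simp only [sub_dotProduct, smul_dotProduct, smul_eq_mul, zero_dotProduct, hP₁l',
        mul_zero] at h
      have hb : (P₁ ⬝ᵥ crossProduct B D) * (P₂ ⬝ᵥ crossProduct A B) = 0 := by linarith
      rcases mul_eq_zero.mp hb with h' | h'
      · exact hα₄ h'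
      · exact hβ₁ h'
    obtain ⟨s, hs, hZQ⟩ := common m (crossProduct B D) ((P₁ ⬝ᵥ crossProduct B D) • P₂ - (P₂ ⬝ᵥ crossProduct B D) • P₁) Q₂ hZ2ne hQ₂ hZ2m hZ2L
      hQ₂m' hQ₂l' (mcross (fun h => hd2 (by rw [det3_eq_dot, h, dotProduct_zero]))
        (dotCrossLeft B D) hmB')
    refine ⟨(det3 P₁ P₂ m) * (P₂ ⬝ᵥ crossProduct C D) * s, mul_ne_zero (mul_ne_zero hΔ hβ₂) hs, ?_⟩
    rw [hTP2, show ((-((P₂ ⬝ᵥ crossProduct C D)*(P₂ ⬝ᵥ crossProduct B D))) • P₁ + ((P₁ ⬝ᵥ crossProduct B D)*(P₂ ⬝ᵥ crossProduct C D)) • P₂) = (P₂ ⬝ᵥ crossProduct C D) • ((P₁ ⬝ᵥ crossProduct B D) • P₂ - (P₂ ⬝ᵥ crossProduct B D) • P₁) from by module, hZQ]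
    module
  · -- third pair
    have hTP3 : ((Matrix.vecMulVec ((-((P₁ ⬝ᵥ crossProduct B D)*(P₂ ⬝ᵥ crossProduct C D))) • P₁ + ((P₁ ⬝ᵥ crossProduct C D)*(P₁ ⬝ᵥ crossProduct B D)) • P₂) (crossProduct P₂ m) + Matrix.vecMulVec ((-((P₂ ⬝ᵥ crossProduct C D)*(P₂ ⬝ᵥ crossProduct B D))) • P₁ + ((P₁ ⬝ᵥ crossProduct B D)*(P₂ ⬝ᵥ crossProduct C D)) • P₂) (crossProduct m P₁) + Matrix.vecMulVec m (crossProduct P₁ P₂))).mulVec P₃ = (crossProduct P₂ m ⬝ᵥ P₃) • ((-((P₁ ⬝ᵥ crossProduct B D)*(P₂ ⬝ᵥ crossProduct C D))) • P₁ + ((P₁ ⬝ᵥ crossProduct C D)*(P₁ ⬝ᵥ crossProduct B D)) • P₂) + (crossProduct m P₁ ⬝ᵥ P₃) • ((-((P₂ ⬝ᵥ crossProduct C D)*(P₂ ⬝ᵥ crossProduct B D))) • P₁ + ((P₁ ⬝ᵥ crossProduct B D)*(P₂ ⬝ᵥ crossProduct C D)) • P₂) := by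
      rw [hTmul P₃, hzlem P₃ hP₃m', zero_smul, add_zero]
    have hR1 : (P₁ ⬝ᵥ crossProduct A D) * (P₁ ⬝ᵥ crossProduct B C) = (P₁ ⬝ᵥ crossProduct A C) * (P₁ ⬝ᵥ crossProduct B D) := by
      have h := grass2 P₁ P₁ A B C D
      rw [hP₁l'] at h
      linarith
    have hR2 : (P₁ ⬝ᵥ crossProduct A D) * (P₂ ⬝ᵥ crossProduct B C) + (P₂ ⬝ᵥ crossProduct A D) * (P₁ ⬝ᵥ crossProduct B C) = (P₁ ⬝ᵥ crossProduct A C) * (P₂ ⬝ᵥ crossProduct B D) - (P₂ ⬝ᵥ crossProduct A B) * (P₁ ⬝ᵥ crossProduct C D) := by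
      have h := grass2 P₁ P₂ A B C D
      rw [hP₁l', hP₂l'] at h
      linarith
    have hR3 : (P₂ ⬝ᵥ crossProduct A D) * (P₂ ⬝ᵥ crossProduct B C) = -((P₂ ⬝ᵥ crossProduct A B) * (P₂ ⬝ᵥ crossProduct C D)) := by
      have h := grass2 P₂ P₂ A B C D
      rw [hP₂l'] at h
      linarith
    have hR4 : (P₁ ⬝ᵥ crossProduct A D) * (crossProduct P₂ m ⬝ᵥ P₃) + (P₂ ⬝ᵥ crossProduct A D) * (crossProduct m P₁ ⬝ᵥ P₃) = 0 := by
      have h := congrArg (fun z => z ⬝ᵥ crossProduct A D) (cramer P₁ P₂ m P₃)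
      simp only [smul_dotProduct, add_dotProduct, smul_eq_mul, hP₃l', mul_zero,
        hzlem P₃ hP₃m', zero_mul] at h
      linarith
    have hG : (((Matrix.vecMulVec ((-((P₁ ⬝ᵥ crossProduct B D)*(P₂ ⬝ᵥ crossProduct C D))) • P₁ + ((P₁ ⬝ᵥ crossProduct C D)*(P₁ ⬝ᵥ crossProduct B D)) • P₂) (crossProduct P₂ m) + Matrix.vecMulVec ((-((P₂ ⬝ᵥ crossProduct C D)*(P₂ ⬝ᵥ crossProduct B D))) • P₁ + ((P₁ ⬝ᵥ crossProduct B D)*(P₂ ⬝ᵥ crossProduct C D)) • P₂) (crossProduct m P₁) + Matrix.vecMulVec m (crossProduct P₁ P₂))).mulVec P₃) ⬝ᵥ crossProduct B C = 0 := by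
      rw [hTP3]
      simp only [add_dotProduct, smul_dotProduct, smul_eq_mul]
      apply mul_left_cancel₀ hβ₅
      rw [mul_zero]
      linear_combination ((crossProduct P₂ m ⬝ᵥ P₃)*(P₁ ⬝ᵥ crossProduct B D)*(P₁ ⬝ᵥ crossProduct C D)) * hR3 - ((crossProduct P₂ m ⬝ᵥ P₃)*(P₂ ⬝ᵥ crossProduct C D)*(P₁ ⬝ᵥ crossProduct B D)) * hR2
        + ((crossProduct P₂ m ⬝ᵥ P₃)*(P₂ ⬝ᵥ crossProduct C D)*(P₂ ⬝ᵥ crossProduct B D)) * hR1 + ((P₂ ⬝ᵥ crossProduct C D)*((P₁ ⬝ᵥ crossProduct B D)*(P₂ ⬝ᵥ crossProduct B C) - (P₂ ⬝ᵥ crossProduct B D)*(P₁ ⬝ᵥ crossProduct B C))) * hR4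
    have hTP3m : (((Matrix.vecMulVec ((-((P₁ ⬝ᵥ crossProduct B D)*(P₂ ⬝ᵥ crossProduct C D))) • P₁ + ((P₁ ⬝ᵥ crossProduct C D)*(P₁ ⬝ᵥ crossProduct B D)) • P₂) (crossProduct P₂ m) + Matrix.vecMulVec ((-((P₂ ⬝ᵥ crossProduct C D)*(P₂ ⬝ᵥ crossProduct B D))) • P₁ + ((P₁ ⬝ᵥ crossProduct B D)*(P₂ ⬝ᵥ crossProduct C D)) • P₂) (crossProduct m P₁) + Matrix.vecMulVec m (crossProduct P₁ P₂))).mulVec P₃) ⬝ᵥ m = 0 := hmapm P₃ hP₃m'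
    have hTP3ne : ((Matrix.vecMulVec ((-((P₁ ⬝ᵥ crossProduct B D)*(P₂ ⬝ᵥ crossProduct C D))) • P₁ + ((P₁ ⬝ᵥ crossProduct C D)*(P₁ ⬝ᵥ crossProduct B D)) • P₂) (crossProduct P₂ m) + Matrix.vecMulVec ((-((P₂ ⬝ᵥ crossProduct C D)*(P₂ ⬝ᵥ crossProduct B D))) • P₁ + ((P₁ ⬝ᵥ crossProduct B D)*(P₂ ⬝ᵥ crossProduct C D)) • P₂) (crossProduct m P₁) + Matrix.vecMulVec m (crossProduct P₁ P₂))).mulVec P₃ ≠ 0 := by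
      intro h0
      have hu : IsUnit ((Matrix.vecMulVec ((-((P₁ ⬝ᵥ crossProduct B D)*(P₂ ⬝ᵥ crossProduct C D))) • P₁ + ((P₁ ⬝ᵥ crossProduct C D)*(P₁ ⬝ᵥ crossProduct B D)) • P₂) (crossProduct P₂ m) + Matrix.vecMulVec ((-((P₂ ⬝ᵥ crossProduct C D)*(P₂ ⬝ᵥ crossProduct B D))) • P₁ + ((P₁ ⬝ᵥ crossProduct B D)*(P₂ ⬝ᵥ crossProduct C D)) • P₂) (crossProduct m P₁) + Matrix.vecMulVec m (crossProduct P₁ P₂))).det := hdetne.isUnit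
      have h := congrArg (fun z => (((Matrix.vecMulVec ((-((P₁ ⬝ᵥ crossProduct B D)*(P₂ ⬝ᵥ crossProduct C D))) • P₁ + ((P₁ ⬝ᵥ crossProduct C D)*(P₁ ⬝ᵥ crossProduct B D)) • P₂) (crossProduct P₂ m) + Matrix.vecMulVec ((-((P₂ ⬝ᵥ crossProduct C D)*(P₂ ⬝ᵥ crossProduct B D))) • P₁ + ((P₁ ⬝ᵥ crossProduct B D)*(P₂ ⬝ᵥ crossProduct C D)) • P₂) (crossProduct m P₁) + Matrix.vecMulVec m (crossProduct P₁ P₂)))⁻¹).mulVec z) h0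
      simp only [Matrix.mulVec_mulVec, Matrix.nonsing_inv_mul _ hu, Matrix.one_mulVec,
        Matrix.mulVec_zero] at h
      exact hP₃ h
    obtain ⟨s, hs, hZQ⟩ := common m (crossProduct B C) (((Matrix.vecMulVec ((-((P₁ ⬝ᵥ crossProduct B D)*(P₂ ⬝ᵥ crossProduct C D))) • P₁ + ((P₁ ⬝ᵥ crossProduct C D)*(P₁ ⬝ᵥ crossProduct B D)) • P₂) (crossProduct P₂ m) + Matrix.vecMulVec ((-((P₂ ⬝ᵥ crossProduct C D)*(P₂ ⬝ᵥ crossProduct B D))) • P₁ + ((P₁ ⬝ᵥ crossProduct B D)*(P₂ ⬝ᵥ crossProduct C D)) • P₂) (crossProduct m P₁) + Matrix.vecMulVec m (crossProduct P₁ P₂))).mulVec P₃) Q₃ hTP3ne hQ₃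
      hTP3m hG hQ₃m' hQ₃l' (mcross (fun h => hd1 (by rw [det3_eq_dot, h, dotProduct_zero]))
        (dotCrossLeft B C) hmB')
    exact ⟨s, hs, hZQ⟩
end
end

section
/- Let U, V, W, X, Y, Z be six points on a nondegenerate conic in the real projective plane. Then the lines UX, VY, WZ are concurrent if and only if (U,X), (V,Y), (W,Z) are pairs of an involution on the conic. -/
open Matrix

noncomputable section

variable {K : Type*} [Field K]

/-!
If the three chords `UX`, `VY`, `WZ` pass through a point `p`, then `p` is off the conic and the
harmonic homology with centre `p` and axis the polar of `p` is an involution of the conic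
exchanging the two ends of every chord through `p`. Conversely, let `T` be an involution of the
conic with pairs `(U,X)`, `(V,Y)`, `(W,Z)`, and `p = UX ∩ VY`. The composite of the homology at `p`
with `T` fixes `U, V, X, Y`, four points of the conic and hence a projective frame, so it is a
scalar. Thus `T` acts as the homology does, and `Z = T W` lies on the line through `W` and `p`.
-/

section ProjectivePlane

lemma ProjEq.symm {p q : Pt K} (h : ProjEq p q) : ProjEq q p := by
  obtain ⟨t, ht, rfl⟩ := h
  exact ⟨t⁻¹, inv_ne_zero ht, by rw [smul_smul, inv_mul_cancel₀ ht, one_smul]⟩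

lemma linearIndependent_pair_of_not_projEq {a b : Pt K} (ha : a ≠ 0) (hb : b ≠ 0)
    (hab : ¬ ProjEq a b) : LinearIndependent K ![a, b] := by
  refine (LinearIndependent.pair_iff' ha).2 fun t hta => ?_
  rcases eq_or_ne t 0 with rfl | ht
  · exact hb (by rw [← hta, zero_smul])
  · exact hab ⟨t, ht, hta.symm⟩

lemma incid_lineThrough_iff_det {a b c : Pt K} :
    Incid c (lineThrough a b) ↔ det ![c, a, b] = 0 := by
  rw [Incid, lineThrough, triple_product_eq_det]

lemma linearIndependent_of_not_incid {a b c : Pt K} (h : ¬ Incid c (lineThrough a b)) :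
    LinearIndependent K ![c, a, b] :=
  linearIndependent_rows_of_det_ne_zero (incid_lineThrough_iff_det.not.1 h)

lemma incid_lineThrough_smul_add_smul (a b : Pt K) (α β : K) :
    Incid (α • a + β • b) (lineThrough a b) := by
  simp [Incid, lineThrough, add_dotProduct, smul_dotProduct, dot_self_cross, dot_cross_self]

lemma exists_eq_smul_add_smul_of_incid {a b c : Pt K} (hab : LinearIndependent K ![a, b])
    (hc : Incid c (lineThrough a b)) : ∃ α β : K, c = α • a + β • b := by
  have hdep : ¬ LinearIndependent K ![c, a, b] := fun h => by
    rw [incid_lineThrough_iff_det] at hc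
    exact (isUnit_iff_ne_zero.1 ((isUnit_iff_isUnit_det _).1
      (linearIndependent_rows_iff_isUnit.1 h))) hc
  rw [Matrix.vecCons, linearIndependent_finCons, not_and_not_right] at hdep
  obtain ⟨α, β, h⟩ := Submodule.mem_span_pair.1 (by simpa using hdep hab)
  exact ⟨β, α, by rw [← h, add_comm]⟩

lemma incid_lineThrough_of_smul_eq_smul_add_smul {w z p : Pt K} {t α β : K} (ht : t ≠ 0)
    (h : t • z = α • w + β • p) : Incid p (lineThrough w z) := by
  have : t * (p ⬝ᵥ w ⨯₃ z) = 0 := by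
    rw [← smul_eq_mul, ← dotProduct_smul, ← map_smul, h]
    simp [dot_cross_self, dotProduct_smul]
  exact (mul_eq_zero.1 this).resolve_left ht

lemma crossProduct_crossProduct_ne_zero {l c d : Pt K} (hcd : LinearIndependent K ![c, d])
    (hc : ¬ Incid c l) : l ⨯₃ (c ⨯₃ d) ≠ 0 := by
  rw [cross_cross_eq_smul_sub_smul', sub_eq_add_neg, ← neg_smul]
  intro h
  exact hc (neg_eq_zero.1 (LinearIndependent.pair_iff.1 hcd _ _ h).2)

lemma exists_smul_crossProduct_eq {a b w : Pt K} (hab : LinearIndependent K ![a, b])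
    (ha : a ⬝ᵥ w = 0) (hb : b ⬝ᵥ w = 0) : ∃ s : K, s • a ⨯₃ b = w := by
  have hn : a ⨯₃ b ≠ 0 := crossProduct_ne_zero_iff_linearIndependent.2 hab
  have hdep : ¬ LinearIndependent K ![a ⨯₃ b, w] := by
    rw [← crossProduct_ne_zero_iff_linearIndependent, cross_cross_eq_smul_sub_smul, ha, hb]
    simp
  simpa [LinearIndependent.pair_iff' hn] using hdep

end ProjectivePlane

section Frame

lemma Matrix.mulVec_eq_smul_of_frame {n : Type*} [Fintype n] [DecidableEq n]
    {A : Matrix n n K} {f : n → n → K} (hf : LinearIndependent K f) {c l : n → K} {μ : K}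
    (hc : ∀ i, c i ≠ 0) (hAf : ∀ i, A *ᵥ f i = l i • f i)
    (hAy : A *ᵥ ∑ i, c i • f i = μ • ∑ i, c i • f i) (w : n → K) : A *ᵥ w = μ • w := by
  have hl : ∀ i, l i = μ := by
    have hsum : ∑ i, (c i * (l i - μ)) • f i = A *ᵥ ∑ i, c i • f i - μ • ∑ i, c i • f i := by
      simp only [mulVec_sum, mulVec_smul, hAf, Finset.smul_sum, ← Finset.sum_sub_distrib]
      exact Finset.sum_congr rfl fun i _ => by module
    have hg := Fintype.linearIndependent_iff.1 hf _ (by rw [hsum, hAy, sub_self])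
    exact fun i => sub_eq_zero.1 ((mul_eq_zero.1 (hg i)).resolve_left (hc i))
  have hspan : Submodule.span K (Set.range f) ≤ Module.End.eigenspace (toLin' A) μ := by
    rw [Submodule.span_le]
    rintro _ ⟨i, rfl⟩
    simp [hAf, hl]
  have hw : w ∈ Module.End.eigenspace (toLin' A) μ :=
    hspan (by rw [hf.span_eq_top_of_card_eq_finrank' (by simp)]; trivial)
  simpa [Module.End.mem_eigenspace_iff] using hw

lemma exists_eq_sum_of_not_incid {u v x y : Pt K} (hli : LinearIndependent K ![u, v, x])
    (hyvx : ¬ Incid y (lineThrough v x)) (hyux : ¬ Incid y (lineThrough u x))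
    (hyuv : ¬ Incid y (lineThrough u v)) :
    ∃ c : Fin 3 → K, (∀ i, c i ≠ 0) ∧ y = ∑ i, c i • ![u, v, x] i := by
  obtain ⟨c, hc⟩ := Submodule.mem_span_range_iff_exists_fun K |>.1
    (by rw [hli.span_eq_top_of_card_eq_finrank (by simp)]; trivial : y ∈ _)
  refine ⟨c, fun i hi => ?_, hc.symm⟩
  simp only [Fin.sum_univ_three, Matrix.cons_val_zero, Matrix.cons_val_one,
    Matrix.cons_val_two, Matrix.tail_cons, Matrix.head_cons] at hc
  fin_cases i <;> simp only [Fin.zero_eta, Fin.mk_one, Fin.reduceFinMk] at hi <;>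
    simp only [hi, zero_smul, zero_add, add_zero] at hc
  · exact hyvx (hc ▸ incid_lineThrough_smul_add_smul v x _ _)
  · exact hyux (hc ▸ incid_lineThrough_smul_add_smul u x _ _)
  · exact hyuv (hc ▸ incid_lineThrough_smul_add_smul u v _ _)

end Frame

section Conic

variable {M : Matrix (Fin 3) (Fin 3) K}

lemma dotProduct_mulVec_comm_of_isSymm (hM : M.IsSymm) (x y : Pt K) :
    x ⬝ᵥ M *ᵥ y = y ⬝ᵥ M *ᵥ x := by
  rw [dotProduct_mulVec, ← mulVec_transpose, hM.eq, dotProduct_comm]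

lemma dotProduct_mulVec_smul_add_smul_of_onConic (hM : M.IsSymm) {a b : Pt K}
    (ha : OnConic M a) (hb : OnConic M b) (α β : K) :
    (α • a + β • b) ⬝ᵥ M *ᵥ (α • a + β • b) = 2 * α * β * (a ⬝ᵥ M *ᵥ b) := by
  unfold OnConic at ha hb
  simp only [mulVec_add, mulVec_smul, dotProduct_add, add_dotProduct, dotProduct_smul,
    smul_dotProduct, smul_eq_mul, ha, hb, dotProduct_mulVec_comm_of_isSymm hM b a]
  ring

lemma dotProduct_mulVec_ne_zero_of_onConic (hM : NondegConic M) {a b : Pt K}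
    (hab : LinearIndependent K ![a, b]) (ha : OnConic M a) (hb : OnConic M b) :
    a ⬝ᵥ M *ᵥ b ≠ 0 := by
  intro h
  have hinj : Function.Injective M.mulVec :=
    mulVec_injective_iff_isUnit.2 ((isUnit_iff_isUnit_det M).2 hM.2.isUnit)
  obtain ⟨s, hs⟩ := exists_smul_crossProduct_eq hab ha
    (by rwa [dotProduct_mulVec_comm_of_isSymm hM.1])
  obtain ⟨u, hu⟩ := exists_smul_crossProduct_eq hab h hb
  have hcomb : u • a + (-s) • b = 0 := hinj (by
    rw [mulVec_add, mulVec_smul, mulVec_smul, ← hs, ← hu, mulVec_zero, smul_smul, smul_smul,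
      mul_comm, neg_mul, neg_smul, add_neg_cancel])
  have hs0 : s = 0 := neg_eq_zero.1 (LinearIndependent.pair_iff.1 hab _ _ hcomb).2
  have ha0 : a ≠ 0 := hab.ne_zero 0
  exact ha0 (hinj (by rw [← hs, hs0, zero_smul, mulVec_zero]))

variable [NeZero (2 : K)]

lemma projEq_or_projEq_of_incid_of_onConic (hM : NondegConic M) {a b c : Pt K}
    (hab : LinearIndependent K ![a, b]) (ha : OnConic M a) (hb : OnConic M b) (hc0 : c ≠ 0)
    (hc : OnConic M c) (hinc : Incid c (lineThrough a b)) : ProjEq a c ∨ ProjEq b c := by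
  obtain ⟨α, β, rfl⟩ := exists_eq_smul_add_smul_of_incid hab hinc
  have hαβ : 2 * α * β * (a ⬝ᵥ M *ᵥ b) = 0 := by
    rw [← dotProduct_mulVec_smul_add_smul_of_onConic hM.1 ha hb]; exact hc
  rcases mul_eq_zero.1 hαβ with hαβ | hab'
  · rcases mul_eq_zero.1 hαβ with hα | hβ
    · have hα : α = 0 := (mul_eq_zero.1 hα).resolve_left two_ne_zero
      subst hα
      refine .inr ⟨β, fun hβ => hc0 ?_, by simp⟩
      simp [hβ]
    · subst hβ
      refine .inl ⟨α, fun hα => hc0 ?_, by simp⟩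
      simp [hα]
  · exact absurd hab' (dotProduct_mulVec_ne_zero_of_onConic hM hab ha hb)

lemma not_incid_lineThrough_of_onConic (hM : NondegConic M) {a b c : Pt K}
    (ha0 : a ≠ 0) (hb0 : b ≠ 0) (hc0 : c ≠ 0)
    (hab : ¬ ProjEq a b) (hac : ¬ ProjEq a c) (hbc : ¬ ProjEq b c)
    (ha : OnConic M a) (hb : OnConic M b) (hc : OnConic M c) :
    ¬ Incid c (lineThrough a b) := fun hinc =>
  (projEq_or_projEq_of_incid_of_onConic hM (linearIndependent_pair_of_not_projEq ha0 hb0 hab)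
    ha hb hc0 hc hinc).elim hac hbc

end Conic

section HarmonicHomology

variable {M : Matrix (Fin 3) (Fin 3) K} {p : Pt K}

/-- The harmonic homology with centre `p` and axis the polar of `p`. -/
def harmonicHomology (M : Matrix (Fin 3) (Fin 3) K) (p : Pt K) : Matrix (Fin 3) (Fin 3) K :=
  (p ⬝ᵥ M *ᵥ p) • 1 - (2 : K) • vecMulVec p (M *ᵥ p)

lemma harmonicHomology_mulVec (x : Pt K) :
    harmonicHomology M p *ᵥ x = (p ⬝ᵥ M *ᵥ p) • x - (2 * (x ⬝ᵥ M *ᵥ p)) • p := by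
  rw [harmonicHomology, sub_mulVec, smul_mulVec, one_mulVec, smul_mulVec, vecMulVec_mulVec,
    op_smul_eq_smul, smul_smul, dotProduct_comm (M *ᵥ p) x]

lemma harmonicHomology_mulVec_mulVec (x : Pt K) :
    harmonicHomology M p *ᵥ (harmonicHomology M p *ᵥ x) = (p ⬝ᵥ M *ᵥ p) ^ 2 • x := by
  rw [harmonicHomology_mulVec, harmonicHomology_mulVec x]
  simp only [sub_dotProduct, smul_dotProduct, smul_eq_mul]
  module

lemma harmonicHomology_det_ne_zero (hp : p ⬝ᵥ M *ᵥ p ≠ 0) : (harmonicHomology M p).det ≠ 0 := by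
  rw [← isUnit_iff_ne_zero, ← isUnit_iff_isUnit_det, ← mulVec_injective_iff_isUnit]
  intro x y hxy
  have h := congrArg (harmonicHomology M p *ᵥ ·) hxy
  simp only [harmonicHomology_mulVec_mulVec] at h
  exact smul_right_injective _ (pow_ne_zero 2 hp) h

lemma harmonicHomology_onConic (hM : M.IsSymm) {x : Pt K} (hx : OnConic M x) :
    OnConic M (harmonicHomology M p *ᵥ x) := by
  unfold OnConic at hx ⊢
  rw [harmonicHomology_mulVec]
  simp only [mulVec_sub, mulVec_smul, dotProduct_sub, sub_dotProduct, dotProduct_smul,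
    smul_dotProduct, smul_eq_mul, hx, dotProduct_mulVec_comm_of_isSymm hM p x]
  ring

lemma harmonicHomology_mulVec_of_eq_smul_add_smul (hM : M.IsSymm) {a b : Pt K} {α β : K}
    (ha : OnConic M a) (hb : OnConic M b) (hp : p = α • a + β • b) :
    harmonicHomology M p *ᵥ a = (-2 * β ^ 2 * (a ⬝ᵥ M *ᵥ b)) • b := by
  have hap : a ⬝ᵥ M *ᵥ p = β * (a ⬝ᵥ M *ᵥ b) := by
    unfold OnConic at ha
    simp [hp, mulVec_add, mulVec_smul, dotProduct_add, dotProduct_smul, ha]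
  rw [harmonicHomology_mulVec, hap, hp, dotProduct_mulVec_smul_add_smul_of_onConic hM ha hb]
  module

lemma harmonicHomology_swaps (hM : M.IsSymm) (hp : p ⬝ᵥ M *ᵥ p ≠ 0) {a b : Pt K}
    (hab : LinearIndependent K ![a, b]) (ha : OnConic M a) (hb : OnConic M b)
    (hinc : Incid p (lineThrough a b)) :
    ProjEq b (harmonicHomology M p *ᵥ a) ∧ ProjEq a (harmonicHomology M p *ᵥ b) := by
  obtain ⟨α, β, hpab⟩ := exists_eq_smul_add_smul_of_incid hab hinc
  rw [hpab, dotProduct_mulVec_smul_add_smul_of_onConic hM ha hb] at hp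
  have h2 : (2 : K) ≠ 0 := by intro h; simp [h] at hp
  have hβ : β ≠ 0 := by rintro rfl; simp at hp
  have hα : α ≠ 0 := by rintro rfl; simp at hp
  have hab' : a ⬝ᵥ M *ᵥ b ≠ 0 := by intro h; simp [h] at hp
  refine ⟨⟨_, ?_, harmonicHomology_mulVec_of_eq_smul_add_smul hM ha hb hpab⟩,
    ⟨_, ?_, harmonicHomology_mulVec_of_eq_smul_add_smul hM hb ha (hpab.trans (add_comm _ _))⟩⟩
  · exact mul_ne_zero (mul_ne_zero (neg_ne_zero.2 h2) (pow_ne_zero 2 hβ)) hab'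
  · rw [dotProduct_mulVec_comm_of_isSymm hM]
    exact mul_ne_zero (mul_ne_zero (neg_ne_zero.2 h2) (pow_ne_zero 2 hα)) hab'

end HarmonicHomology

section Involution

variable {M : Matrix (Fin 3) (Fin 3) K}

lemma exists_mul_mulVec_eq_smul_of_swaps {S T : Matrix (Fin 3) (Fin 3) K} {a b : Pt K}
    (hTa : ProjEq b (T *ᵥ a)) (hTTa : ProjEq a (T *ᵥ (T *ᵥ a)))
    (hSa : ProjEq b (S *ᵥ a)) (hSb : ProjEq a (S *ᵥ b)) :
    (∃ l : K, (S * T) *ᵥ a = l • a) ∧ ∃ l : K, (S * T) *ᵥ b = l • b := by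
  obtain ⟨s, hs, hTa⟩ := hTa
  obtain ⟨r, -, hTTa⟩ := hTTa
  obtain ⟨k, -, hSa⟩ := hSa
  obtain ⟨k', -, hSb⟩ := hSb
  have hTb : T *ᵥ b = (s⁻¹ * r) • a := by
    rw [hTa, mulVec_smul] at hTTa
    rw [mul_smul, ← hTTa, inv_smul_smul₀ hs]
  refine ⟨⟨s * k', ?_⟩, ⟨s⁻¹ * r * k, ?_⟩⟩
  · rw [← mulVec_mulVec, hTa, mulVec_smul, hSb, smul_smul]
  · rw [← mulVec_mulVec, hTb, mulVec_smul, hSa, smul_smul]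

theorem involutionPairsOnConic_harmonicHomology (hM : M.IsSymm) {p U V W X Y Z : Pt K}
    (hp : p ⬝ᵥ M *ᵥ p ≠ 0) (hUX : LinearIndependent K ![U, X])
    (hVY : LinearIndependent K ![V, Y]) (hWZ : LinearIndependent K ![W, Z])
    (hUc : OnConic M U) (hVc : OnConic M V) (hWc : OnConic M W)
    (hXc : OnConic M X) (hYc : OnConic M Y) (hZc : OnConic M Z)
    (hpUX : Incid p (lineThrough U X)) (hpVY : Incid p (lineThrough V Y))
    (hpWZ : Incid p (lineThrough W Z)) :
    InvolutionPairsOnConic M U X V Y W Z :=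
  ⟨harmonicHomology M p, harmonicHomology_det_ne_zero hp,
    fun _ _ hx => harmonicHomology_onConic hM hx,
    fun x _ _ => ⟨_, pow_ne_zero 2 hp, harmonicHomology_mulVec_mulVec x⟩,
    (harmonicHomology_swaps hM hp hUX hUc hXc hpUX).1,
    (harmonicHomology_swaps hM hp hVY hVc hYc hpVY).1,
    (harmonicHomology_swaps hM hp hWZ hWc hZc hpWZ).1⟩

variable [NeZero (2 : K)]

lemma dotProduct_mulVec_ne_zero_of_incid_secants (hM : NondegConic M) {p U V X Y : Pt K}
    (hp : p ≠ 0) (hU : U ≠ 0) (hV : V ≠ 0) (hX : X ≠ 0) (hY : Y ≠ 0)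
    (hUV : ¬ ProjEq U V) (hUX : ¬ ProjEq U X) (hUY : ¬ ProjEq U Y)
    (hVX : ¬ ProjEq V X) (hVY : ¬ ProjEq V Y) (hXY : ¬ ProjEq X Y)
    (hUc : OnConic M U) (hVc : OnConic M V) (hXc : OnConic M X) (hYc : OnConic M Y)
    (hpUX : Incid p (lineThrough U X)) (hpVY : Incid p (lineThrough V Y)) :
    p ⬝ᵥ M *ᵥ p ≠ 0 := fun hpc => by
  rcases projEq_or_projEq_of_incid_of_onConic hM (linearIndependent_pair_of_not_projEq hU hX hUX)
    hUc hXc hp hpc hpUX with ⟨t, ht, rfl⟩ | ⟨t, ht, rfl⟩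
  · exact not_incid_lineThrough_of_onConic hM hV hY hU hVY (mt ProjEq.symm hUV)
      (mt ProjEq.symm hUY) hVc hYc hUc (by simpa [Incid, smul_dotProduct, ht] using hpVY)
  · exact not_incid_lineThrough_of_onConic hM hV hY hX hVY hVX (mt ProjEq.symm hXY)
      hVc hYc hXc (by simpa [Incid, smul_dotProduct, ht] using hpVY)

theorem incid_lineThrough_of_involutionPairsOnConic (hM : NondegConic M)
    {p U V W X Y Z : Pt K} (hp : p ⬝ᵥ M *ᵥ p ≠ 0)
    (hU : U ≠ 0) (hV : V ≠ 0) (hX : X ≠ 0) (hY : Y ≠ 0)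
    (hUV : ¬ ProjEq U V) (hUX : ¬ ProjEq U X) (hUY : ¬ ProjEq U Y)
    (hVX : ¬ ProjEq V X) (hVY : ¬ ProjEq V Y) (hXY : ¬ ProjEq X Y)
    (hUc : OnConic M U) (hVc : OnConic M V) (hXc : OnConic M X) (hYc : OnConic M Y)
    (hpUX : Incid p (lineThrough U X)) (hpVY : Incid p (lineThrough V Y))
    (hT : InvolutionPairsOnConic M U X V Y W Z) : Incid p (lineThrough W Z) := by
  obtain ⟨T, -, -, hTT, hTU, hTV, s, hs, hTW⟩ := hT
  obtain ⟨hHU, hHX⟩ :=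
    harmonicHomology_swaps hM.1 hp (linearIndependent_pair_of_not_projEq hU hX hUX) hUc hXc hpUX
  obtain ⟨hHV, hHY⟩ :=
    harmonicHomology_swaps hM.1 hp (linearIndependent_pair_of_not_projEq hV hY hVY) hVc hYc hpVY
  obtain ⟨⟨l₁, hl₁⟩, ⟨l₃, hl₃⟩⟩ :=
    exists_mul_mulVec_eq_smul_of_swaps hTU (hTT U hU hUc) hHU hHX
  obtain ⟨⟨l₂, hl₂⟩, ⟨μ, hμ⟩⟩ :=
    exists_mul_mulVec_eq_smul_of_swaps hTV (hTT V hV hVc) hHV hHY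
  have hUVX := linearIndependent_of_not_incid
    (not_incid_lineThrough_of_onConic hM hV hX hU hVX (mt ProjEq.symm hUV) (mt ProjEq.symm hUX)
      hVc hXc hUc)
  obtain ⟨c, hc, hYsum⟩ := exists_eq_sum_of_not_incid hUVX
    (not_incid_lineThrough_of_onConic hM hV hX hY hVX hVY hXY hVc hXc hYc)
    (not_incid_lineThrough_of_onConic hM hU hX hY hUX hUY hXY hUc hXc hYc)
    (not_incid_lineThrough_of_onConic hM hU hV hY hUV hUY hVY hUc hVc hYc)
  have hHT := mulVec_eq_smul_of_frame (A := harmonicHomology M p * T) (l := ![l₁, l₂, l₃])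
    hUVX hc (fun i => by fin_cases i <;> simp [hl₁, hl₂, hl₃]) (by rw [← hYsum, hμ]) W
  have hZ : ((p ⬝ᵥ M *ᵥ p) ^ 2 * s) • Z
      = (μ * (p ⬝ᵥ M *ᵥ p)) • W + (-(μ * (2 * (W ⬝ᵥ M *ᵥ p)))) • p := by
    rw [mul_smul, ← hTW, ← harmonicHomology_mulVec_mulVec, mulVec_mulVec W _ T, hHT, mulVec_smul,
      harmonicHomology_mulVec]
    module
  exact incid_lineThrough_of_smul_eq_smul_add_smul (mul_ne_zero (pow_ne_zero 2 hp) hs) hZ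

end Involution

theorem stmt3_general (M : Matrix (Fin 3) (Fin 3) ℝ) (hM : NondegConic M)
    (U V W X Y Z : Pt ℝ)
    (hU : U ≠ 0) (hV : V ≠ 0) (hW : W ≠ 0) (hX : X ≠ 0) (hY : Y ≠ 0) (hZ : Z ≠ 0)
    (hUc : OnConic M U) (hVc : OnConic M V) (hWc : OnConic M W)
    (hXc : OnConic M X) (hYc : OnConic M Y) (hZc : OnConic M Z)
    -- the six points are pairwise distinct
    (hUV : ¬ ProjEq U V) (hUX : ¬ ProjEq U X) (hUY : ¬ ProjEq U Y)
    (hVX : ¬ ProjEq V X) (hVY : ¬ ProjEq V Y) (hWZ : ¬ ProjEq W Z) (hXY : ¬ ProjEq X Y) :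
    ConcurrentLines (lineThrough U X) (lineThrough V Y) (lineThrough W Z) ↔
      InvolutionPairsOnConic M U X V Y W Z := by
  have hoff : ∀ p : Pt ℝ, p ≠ 0 → Incid p (lineThrough U X) → Incid p (lineThrough V Y) →
      p ⬝ᵥ M *ᵥ p ≠ 0 := fun p hp =>
    dotProduct_mulVec_ne_zero_of_incid_secants hM hp hU hV hX hY hUV hUX hUY hVX hVY hXY
      hUc hVc hXc hYc
  have hUX' := linearIndependent_pair_of_not_projEq hU hX hUX
  have hVY' := linearIndependent_pair_of_not_projEq hV hY hVY
  constructor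
  · rintro ⟨p, hp, hpUX, hpVY, hpWZ⟩
    exact involutionPairsOnConic_harmonicHomology hM.1 (hoff p hp hpUX hpVY) hUX' hVY'
      (linearIndependent_pair_of_not_projEq hW hZ hWZ) hUc hVc hWc hXc hYc hZc hpUX hpVY hpWZ
  · intro hT
    set p := lineThrough U X ⨯₃ lineThrough V Y
    have hp : p ≠ 0 := crossProduct_crossProduct_ne_zero hVY'
      (not_incid_lineThrough_of_onConic hM hU hX hV hUX hUV (mt ProjEq.symm hVX) hUc hXc hVc)
    have hpUX : Incid p (lineThrough U X) := (dotProduct_comm _ _).trans (dot_self_cross _ _)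
    have hpVY : Incid p (lineThrough V Y) := (dotProduct_comm _ _).trans (dot_cross_self _ _)
    exact ⟨p, hp, hpUX, hpVY, incid_lineThrough_of_involutionPairsOnConic hM
      (hoff p hp hpUX hpVY) hU hV hX hY hUV hUX hUY hVX hVY hXY hUc hVc hXc hYc hpUX hpVY hT⟩

/-- Let `U, V, W, X, Y, Z` be six (distinct) points on a nondegenerate conic in
the real projective plane.  Then the lines `UX`, `VY`, `WZ` are concurrent if and
only if `(U,X)`, `(V,Y)`, `(W,Z)` are pairs of an involution on the conic. -/
theorem stmt3 (M : Matrix (Fin 3) (Fin 3) ℝ) (hM : NondegConic M)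
    (U V W X Y Z : Pt ℝ)
    (hU : U ≠ 0) (hV : V ≠ 0) (hW : W ≠ 0) (hX : X ≠ 0) (hY : Y ≠ 0) (hZ : Z ≠ 0)
    (hUc : OnConic M U) (hVc : OnConic M V) (hWc : OnConic M W)
    (hXc : OnConic M X) (hYc : OnConic M Y) (hZc : OnConic M Z)
    -- the six points are pairwise distinct
    (hUV : ¬ ProjEq U V) (hUW : ¬ ProjEq U W) (hUX : ¬ ProjEq U X)
    (hUY : ¬ ProjEq U Y) (hUZ : ¬ ProjEq U Z) (hVW : ¬ ProjEq V W)
    (hVX : ¬ ProjEq V X) (hVY : ¬ ProjEq V Y) (hVZ : ¬ ProjEq V Z)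
    (hWX : ¬ ProjEq W X) (hWY : ¬ ProjEq W Y) (hWZ : ¬ ProjEq W Z)
    (hXY : ¬ ProjEq X Y) (hXZ : ¬ ProjEq X Z) (hYZ : ¬ ProjEq Y Z) :
    ConcurrentLines (lineThrough U X) (lineThrough V Y) (lineThrough W Z) ↔
      InvolutionPairsOnConic M U X V Y W Z :=
  stmt3_general M hM U V W X Y Z hU hV hW hX hY hZ hUc hVc hWc hXc hYc hZc hUV hUX hUY hVX hVY hWZ
    hXY
end
end

section
/- Let S be the Steiner correspondence with respect to two nondegenerate conics Σ₁, Σ₂ with common self-polar triangle Δ = {D, E, F} in the real projective plane, and let l be a line through the vertex D but not through E or F. Then the image under S of l∖{D} is contained in a line. -/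
open Matrix

noncomputable section

variable {K : Type*} [Field K]

lemma bac_cab {K : Type*} [CommRing K] (u v w : Pt K) :
    crossProduct u (crossProduct v w) = (u ⬝ᵥ w) • v - (u ⬝ᵥ v) • w := by
  funext i
  fin_cases i <;>
    simp [cross_apply, dotProduct, Fin.sum_univ_three] <;> ring

lemma parallel_of_cross_eq_zero {A B : Pt ℝ} (hA : A ≠ 0)
    (h : crossProduct A B = 0) : ∃ c : ℝ, B = c • A := by
  have hli : ¬ LinearIndependent ℝ ![A, B] := by
    rw [← crossProduct_ne_zero_iff_linearIndependent]
    simp [h]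
  rw [LinearIndependent.pair_iff' hA] at hli
  push_neg at hli
  obtain ⟨c, hc⟩ := hli
  exact ⟨c, hc.symm⟩

lemma exists_perp (A : Pt ℝ) : ∃ m : Pt ℝ, m ≠ 0 ∧ A ⬝ᵥ m = 0 := by
  by_cases h : A 0 = 0
  · refine ⟨![1, 0, 0], ?_, by simp [dotProduct, Fin.sum_univ_three, h]⟩
    intro hm; have := congrFun hm 0; simp at this
  · refine ⟨![A 1, -A 0, 0], ?_, by simp [dotProduct, Fin.sum_univ_three]; ring⟩
    intro hm; have := congrFun hm 1; simp at this; exact h this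

lemma exists_common_perp (A B : Pt ℝ) :
    ∃ m : Pt ℝ, m ≠ 0 ∧ A ⬝ᵥ m = 0 ∧ B ⬝ᵥ m = 0 := by
  by_cases hA : A = 0
  · obtain ⟨m, hm, hBm⟩ := exists_perp B
    exact ⟨m, hm, by simp [hA], hBm⟩
  by_cases hX : crossProduct A B = 0
  · obtain ⟨c, rfl⟩ := parallel_of_cross_eq_zero hA hX
    obtain ⟨m, hm, hAm⟩ := exists_perp A
    exact ⟨m, hm, hAm, by simp [smul_dotProduct, hAm]⟩
  · exact ⟨crossProduct A B, hX, dot_self_cross A B, dot_cross_self A B⟩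

lemma decomp {l D P : Pt ℝ} (hl : l ≠ 0) (hD : D ≠ 0)
    (hDl : D ⬝ᵥ l = 0) (hPl : P ⬝ᵥ l = 0) :
    ∃ s t : ℝ, P = s • D + t • crossProduct l D := by
  have hDD : (D ⬝ᵥ D) ≠ 0 := fun h => hD (dotProduct_self_eq_zero.mp h)
  have key : crossProduct l (crossProduct P D) = 0 := by
    rw [bac_cab, dotProduct_comm l D, dotProduct_comm l P, hDl, hPl]
    simp
  obtain ⟨c, hc⟩ := parallel_of_cross_eq_zero hl key
  have h3 : crossProduct D (crossProduct P D) = (D ⬝ᵥ D) • P - (D ⬝ᵥ P) • D :=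
    bac_cab D P D
  rw [hc] at h3
  have h4 : crossProduct D (c • l) = (-c) • crossProduct l D := by
    rw [_root_.map_smul, ← cross_anticomm l D]
    module
  rw [h4] at h3
  have h5 : (D ⬝ᵥ D) • P = (D ⬝ᵥ P) • D + (-c) • crossProduct l D := by
    have h3' := h3.symm
    rw [sub_eq_iff_eq_add] at h3'
    rw [h3']
    abel
  set dp := D ⬝ᵥ P with hdp
  refine ⟨(D ⬝ᵥ D)⁻¹ * dp, (D ⬝ᵥ D)⁻¹ * (-c), ?_⟩
  have h7 : P = (D ⬝ᵥ D)⁻¹ • (dp • D + (-c) • crossProduct l D) := by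
    rw [← h5, smul_smul, inv_mul_cancel₀ hDD, one_smul]
  rw [h7, smul_add, smul_smul, smul_smul]


/-- Let `S` be the Steiner correspondence of two nondegenerate conics with common
self-polar triangle `Δ = {D, E, F}`, and `l` a line through the vertex `D` but not
through `E` or `F`.  Then the image of `l \ {D}` under `S` is contained in a line. -/
theorem stmt11 (M₁ M₂ : Matrix (Fin 3) (Fin 3) ℝ)
    (h₁ : NondegConic M₁) (h₂ : NondegConic M₂)
    (D E F : Pt ℝ) (hD : D ≠ 0) (hE : E ≠ 0) (hF : F ≠ 0)
    (hΔ : ¬ Collinear3 D E F)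
    (hsp₁ : SelfPolar M₁ D E F) (hsp₂ : SelfPolar M₂ D E F)
    (l : Pt ℝ) (hl : l ≠ 0)
    (hlD : Incid D l) (hlE : ¬ Incid E l) (hlF : ¬ Incid F l) :
    ∃ m : Pt ℝ, m ≠ 0 ∧ ∀ P : Pt ℝ, P ≠ 0 → Incid P l → ¬ ProjEq P D →
      Incid (steiner M₁ M₂ P) m := by
  obtain ⟨a, ha, hMa⟩ := hsp₁.1
  obtain ⟨b, hb, hMb⟩ := hsp₂.1
  simp only [polarLine, lineThrough] at hMa hMb
  simp only [Incid] at hlD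
  set v : Pt ℝ := crossProduct E F with hv
  set Q : Pt ℝ := crossProduct l D with hQ
  set u₁ : Pt ℝ := M₁.mulVec Q with hu₁
  set u₂ : Pt ℝ := M₂.mulVec Q with hu₂
  obtain ⟨m, hm, hAm, hBm⟩ := exists_common_perp
    (a • crossProduct v u₂ + b • crossProduct u₁ v) (crossProduct u₁ u₂)
  refine ⟨m, hm, ?_⟩
  intro P hP hPl hPD
  simp only [Incid] at hPl
  obtain ⟨s, t, hst⟩ := decomp hl hD hlD hPl
  have ht : t ≠ 0 := by
    rintro rfl
    apply hPD
    rw [zero_smul, add_zero] at hst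
    have hs : s ≠ 0 := by rintro rfl; rw [zero_smul] at hst; exact hP hst
    exact ⟨s⁻¹, inv_ne_zero hs, by rw [hst, smul_smul, inv_mul_cancel₀ hs, one_smul]⟩
  have e1 : M₁.mulVec P = (s * a) • v + t • u₁ := by
    rw [hst, mulVec_add, mulVec_smul, mulVec_smul, hMa, smul_smul]
  have e2 : M₂.mulVec P = (s * b) • v + t • u₂ := by
    rw [hst, mulVec_add, mulVec_smul, mulVec_smul, hMb, smul_smul]
  have hkey : steiner M₁ M₂ P
      = (s * t) • (a • crossProduct v u₂ + b • crossProduct u₁ v)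
        + (t * t) • crossProduct u₁ u₂ := by
    simp only [steiner, e1, e2]
    simp only [map_add, _root_.map_smul, LinearMap.add_apply, LinearMap.smul_apply,
      cross_self, smul_zero]
    module
  simp only [Incid, hkey, add_dotProduct, smul_dotProduct, hAm, hBm, smul_zero, add_zero]
end
end

section
/- Let A', B', C', D be four points in the real projective plane, no three collinear, and let m be a line not through any of them. Let U', V', W', X', Y', Z' be the intersections of m with the lines B'C', A'C', A'B', A'D, B'D, C'D respectively. Then cr(U',V',W',Z') = cr(X',Y',Z',W') on the line m, i.e., (U',X'), (V',Y'), (W',Z') are pairs of an involution on m. -/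
open Matrix

noncomputable section

variable {K : Type*} [Field K]

-- AUX

lemma cross_ent (a b : Pt K) (i : Fin 3) : crossProduct a b i =
    ![a 1 * b 2 - a 2 * b 1, a 2 * b 0 - a 0 * b 2, a 0 * b 1 - a 1 * b 0] i := by
  rw [cross_apply]

lemma det3_expand (a b c : Pt K) : det3 a b c =
    a 0 * b 1 * c 2 - a 0 * b 2 * c 1 - a 1 * b 0 * c 2 + a 1 * b 2 * c 0
      + a 2 * b 0 * c 1 - a 2 * b 1 * c 0 := by
  simp [det3, Matrix.det_fin_three]

lemma dot_expand (a b : Pt K) : a ⬝ᵥ b = a 0 * b 0 + a 1 * b 1 + a 2 * b 2 := by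
  simp [dotProduct, Fin.sum_univ_three]

lemma crossCross' (a b p : Pt K) (h1 : p ⬝ᵥ a = 0) (h2 : p ⬝ᵥ b = 0) :
    crossProduct (crossProduct a b) p = 0 := by
  rw [dot_expand] at h1 h2
  funext i
  fin_cases i <;> simp [cross_ent] <;>
    first
      | linear_combination b 0 * h1 - a 0 * h2
      | linear_combination b 1 * h1 - a 1 * h2
      | linear_combination b 2 * h1 - a 2 * h2
      | linear_combination a 0 * h2 - b 0 * h1
      | linear_combination a 1 * h2 - b 1 * h1
      | linear_combination a 2 * h2 - b 2 * h1

lemma det3_smul2 (O x y : Pt K) (t s : K) :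
    det3 O (t • x) (s • y) = t * s * det3 O x y := by
  simp only [det3_expand, Pi.smul_apply, smul_eq_mul]; ring

lemma det3_crossm (O m u v : Pt K) :
    det3 O (crossProduct m u) (crossProduct m v) = (O ⬝ᵥ m) * det3 m u v := by
  simp only [det3_expand, cross_ent, dot_expand]
  simp only [Matrix.cons_val_zero, Matrix.cons_val_one, Matrix.head_cons,
    Matrix.cons_val_two, Matrix.tail_cons]
  ring

lemma det3_nonzero_vec (x y v : Pt K) (h : det3 x y v ≠ 0) : v ≠ 0 := by
  intro hv; apply h; subst hv; simp [det3_expand]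

lemma det3_vU (a b c m : Pt K) :
    det3 a b (crossProduct m (crossProduct b c)) = -(m ⬝ᵥ b) * det3 a b c := by
  simp only [det3_expand, cross_ent, dot_expand]
  simp only [Matrix.cons_val_zero, Matrix.cons_val_one, Matrix.head_cons,
    Matrix.cons_val_two, Matrix.tail_cons]
  ring

lemma L1 (a b c m : Pt K) : det3 m (crossProduct b c) (crossProduct a b)
    = -(det3 a b c) * (m ⬝ᵥ b) := by
  simp only [det3_expand, cross_ent, dot_expand]
  simp only [Matrix.cons_val_zero, Matrix.cons_val_one, Matrix.head_cons,
    Matrix.cons_val_two, Matrix.tail_cons]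
  ring

lemma L2 (a b c m : Pt K) : det3 m (crossProduct a b) (crossProduct b c)
    = det3 a b c * (m ⬝ᵥ b) := by
  simp only [det3_expand, cross_ent, dot_expand]
  simp only [Matrix.cons_val_zero, Matrix.cons_val_one, Matrix.head_cons,
    Matrix.cons_val_two, Matrix.tail_cons]
  ring

lemma L3 (a b c m : Pt K) : det3 m (crossProduct a c) (crossProduct a b)
    = -(det3 a b c) * (m ⬝ᵥ a) := by
  simp only [det3_expand, cross_ent, dot_expand]
  simp only [Matrix.cons_val_zero, Matrix.cons_val_one, Matrix.head_cons,
    Matrix.cons_val_two, Matrix.tail_cons]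
  ring

lemma L4 (a b c m : Pt K) : det3 m (crossProduct a c) (crossProduct b c)
    = det3 a b c * (m ⬝ᵥ c) := by
  simp only [det3_expand, cross_ent, dot_expand]
  simp only [Matrix.cons_val_zero, Matrix.cons_val_one, Matrix.head_cons,
    Matrix.cons_val_two, Matrix.tail_cons]
  ring

lemma det3_swap12 (a b c : Pt K) : det3 b a c = -det3 a b c := by
  simp only [det3_expand]; ring

lemma det3_cyc (a b c : Pt K) : det3 c a b = det3 a b c := by
  simp only [det3_expand]; ring

lemma exists_smul (v p : Pt K) (hp : p ≠ 0)
    (h : crossProduct v p = 0) (hv : v ≠ 0) : ∃ t : K, t ≠ 0 ∧ p = t • v := by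
  have h0 := congrFun h 0
  have h1 := congrFun h 1
  have h2 := congrFun h 2
  simp only [cross_ent, Matrix.cons_val_zero, Matrix.cons_val_one, Matrix.head_cons,
    Matrix.cons_val_two, Matrix.tail_cons, Pi.zero_apply, Matrix.cons_val',
    Matrix.empty_val', Matrix.cons_val_fin_one] at h0 h1 h2
  have hvi : v 0 ≠ 0 ∨ v 1 ≠ 0 ∨ v 2 ≠ 0 := by
    by_contra hc
    push_neg at hc
    exact hv (funext fun i => by fin_cases i <;> simp [hc.1, hc.2.1, hc.2.2])
  have mk : ∀ t : K, p = t • v → ∃ t : K, t ≠ 0 ∧ p = t • v := by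
    intro t ht
    refine ⟨t, fun h0 => hp ?_, ht⟩
    rw [ht, h0, zero_smul]
  rcases hvi with hnz | hnz | hnz
  · refine mk (p 0 / v 0) (funext fun j => ?_)
    simp only [Pi.smul_apply, smul_eq_mul]
    fin_cases j
    · show p 0 = p 0 / v 0 * v 0; field_simp
    · show p 1 = p 0 / v 0 * v 1; field_simp
      first | linear_combination h2 | linear_combination -h2
    · show p 2 = p 0 / v 0 * v 2; field_simp
      first | linear_combination h1 | linear_combination -h1
  · refine mk (p 1 / v 1) (funext fun j => ?_)
    simp only [Pi.smul_apply, smul_eq_mul]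
    fin_cases j
    · show p 0 = p 1 / v 1 * v 0; field_simp
      first | linear_combination h2 | linear_combination -h2
    · show p 1 = p 1 / v 1 * v 1; field_simp
    · show p 2 = p 1 / v 1 * v 2; field_simp
      first | linear_combination h0 | linear_combination -h0
  · refine mk (p 2 / v 2) (funext fun j => ?_)
    simp only [Pi.smul_apply, smul_eq_mul]
    fin_cases j
    · show p 0 = p 2 / v 2 * v 0; field_simp
      first | linear_combination h1 | linear_combination -h1
    · show p 1 = p 2 / v 2 * v 1; field_simp
      first | linear_combination h0 | linear_combination -h0
    · show p 2 = p 2 / v 2 * v 2; field_simp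


/-- **Quantitative form of the complete quadrangle involution theorem** (Desargues'
involution theorem for the pencil of line-pairs through four points): if
`A', B', C', D` are four points in the real projective plane, no three collinear,
`m` a line through none of them, and `U', V', W', X', Y', Z'` are the intersections
of `m` with the lines `B'C'`, `A'C'`, `A'B'`, `A'D`, `B'D`, `C'D` respectively, then
`cr(U',V',W',Z') = cr(X',Y',Z',W')` on `m` (the cross ratio being computed by
projection from any auxiliary point `O` not on `m`); that is, `(U',X')`, `(V',Y')`,
`(W',Z')` are pairs of an involution on `m`. -/
theorem stmt16 (A' B' C' D : Pt ℝ)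
    (hA : A' ≠ 0) (hB : B' ≠ 0) (hC : C' ≠ 0) (hD : D ≠ 0)
    (h1 : ¬ Collinear3 A' B' C') (h2 : ¬ Collinear3 A' B' D)
    (h3 : ¬ Collinear3 A' C' D) (h4 : ¬ Collinear3 B' C' D)
    (m : Pt ℝ) (hm : m ≠ 0)
    (hmA : ¬ Incid A' m) (hmB : ¬ Incid B' m) (hmC : ¬ Incid C' m) (hmD : ¬ Incid D m)
    (U' V' W' X' Y' Z' : Pt ℝ)
    (hU : U' ≠ 0) (hV : V' ≠ 0) (hW : W' ≠ 0)
    (hX : X' ≠ 0) (hY : Y' ≠ 0) (hZ : Z' ≠ 0)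
    (hUm : Incid U' m) (hUl : Incid U' (lineThrough B' C'))
    (hVm : Incid V' m) (hVl : Incid V' (lineThrough A' C'))
    (hWm : Incid W' m) (hWl : Incid W' (lineThrough A' B'))
    (hXm : Incid X' m) (hXl : Incid X' (lineThrough A' D))
    (hYm : Incid Y' m) (hYl : Incid Y' (lineThrough B' D))
    (hZm : Incid Z' m) (hZl : Incid Z' (lineThrough C' D)) :
    ∀ O : Pt ℝ, O ≠ 0 → ¬ Incid O m →
      crFrom O U' V' W' Z' = crFrom O X' Y' Z' W' := by
  have hABC : det3 A' B' C' ≠ 0 := h1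
  have hABD : det3 A' B' D ≠ 0 := h2
  have hACD : det3 A' C' D ≠ 0 := h3
  have hBCD : det3 B' C' D ≠ 0 := h4
  have hmA' : m ⬝ᵥ A' ≠ 0 := by rw [dotProduct_comm]; exact hmA
  have hmB' : m ⬝ᵥ B' ≠ 0 := by rw [dotProduct_comm]; exact hmB
  have hmC' : m ⬝ᵥ C' ≠ 0 := by rw [dotProduct_comm]; exact hmC
  have hmD' : m ⬝ᵥ D ≠ 0 := by rw [dotProduct_comm]; exact hmD
  have getpt : ∀ p x y b c : Pt ℝ, p ≠ 0 → Incid p m → Incid p (lineThrough b c) →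
      det3 x y (crossProduct m (crossProduct b c)) ≠ 0 →
      ∃ t : ℝ, t ≠ 0 ∧ p = t • crossProduct m (crossProduct b c) :=
    fun p x y b c hp hpm hpl hd =>
      exists_smul _ _ hp (crossCross' _ _ _ hpm hpl) (det3_nonzero_vec x y _ hd)
  obtain ⟨tU, htU, hUe⟩ := getpt U' A' B' B' C' hU hUm hUl
    (by rw [det3_vU]; exact mul_ne_zero (neg_ne_zero.mpr hmB') hABC)
  obtain ⟨tV, htV, hVe⟩ := getpt V' B' A' A' C' hV hVm hVl
    (by rw [det3_vU, det3_swap12]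
        exact mul_ne_zero (neg_ne_zero.mpr hmA') (neg_ne_zero.mpr hABC))
  obtain ⟨tW, htW, hWe⟩ := getpt W' C' A' A' B' hW hWm hWl
    (by rw [det3_vU, det3_cyc]; exact mul_ne_zero (neg_ne_zero.mpr hmA') hABC)
  obtain ⟨tX, htX, hXe⟩ := getpt X' B' A' A' D hX hXm hXl
    (by rw [det3_vU, det3_swap12]
        exact mul_ne_zero (neg_ne_zero.mpr hmA') (neg_ne_zero.mpr hABD))
  obtain ⟨tY, htY, hYe⟩ := getpt Y' A' B' B' D hY hYm hYl
    (by rw [det3_vU]; exact mul_ne_zero (neg_ne_zero.mpr hmB') hABD)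
  obtain ⟨tZ, htZ, hZe⟩ := getpt Z' A' C' C' D hZ hZm hZl
    (by rw [det3_vU]; exact mul_ne_zero (neg_ne_zero.mpr hmC') hACD)
  intro O hO hOm
  have hOm' : O ⬝ᵥ m ≠ 0 := hOm
  have e1 : det3 m (crossProduct B' C') (crossProduct A' B')
      = -(det3 A' B' C') * (m ⬝ᵥ B') := L1 A' B' C' m
  have e2 : det3 m (crossProduct A' C') (crossProduct C' D)
      = det3 A' C' D * (m ⬝ᵥ C') := L2 A' C' D m
  have e3 : det3 m (crossProduct A' C') (crossProduct A' B')
      = -(det3 A' B' C') * (m ⬝ᵥ A') := L3 A' B' C' m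
  have e4 : det3 m (crossProduct B' C') (crossProduct C' D)
      = det3 B' C' D * (m ⬝ᵥ C') := L2 B' C' D m
  have e5 : det3 m (crossProduct A' D) (crossProduct C' D)
      = det3 A' C' D * (m ⬝ᵥ D) := L4 A' C' D m
  have e6 : det3 m (crossProduct B' D) (crossProduct A' B')
      = -(det3 A' B' D) * (m ⬝ᵥ B') := L1 A' B' D m
  have e7 : det3 m (crossProduct B' D) (crossProduct C' D)
      = det3 B' C' D * (m ⬝ᵥ D) := L4 B' C' D m
  have e8 : det3 m (crossProduct A' D) (crossProduct A' B')
      = -(det3 A' B' D) * (m ⬝ᵥ A') := L3 A' B' D m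
  unfold crFrom
  rw [hUe, hVe, hWe, hXe, hYe, hZe]
  unfold lineThrough at *
  simp only [det3_smul2, det3_crossm, e1, e2, e3, e4, e5, e6, e7, e8]
  rw [div_eq_div_iff]
  · ring
  · apply_rules [mul_ne_zero, neg_ne_zero.mpr]
  · apply_rules [mul_ne_zero, neg_ne_zero.mpr]
end
end

section
/- Let Σ₁, Σ₂ be nondegenerate conics with common self-polar triangle Δ in the real projective plane and S the Steiner correspondence. If three points P, Q, R not on the side lines of Δ are collinear on a line l avoiding the vertices of Δ, then S(P), S(Q), S(R) lie on a common conic through the three vertices of Δ, and conversely S maps any conic through the three vertices of Δ (minus those vertices) onto a line. -/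
open Matrix

noncomputable section

variable {K : Type*} [Field K]

section Aux

lemma aux_repr (D₁ D₂ D₃ : Pt ℝ) (hδ : det3 D₁ D₂ D₃ ≠ 0) (p : Pt ℝ) :
    ∃ y₁ y₂ y₃ : ℝ, p = y₁•D₁ + y₂•D₂ + y₃•D₃ := by
  set A : Matrix (Fin 3) (Fin 3) ℝ := (Matrix.of ![D₁, D₂, D₃])ᵀ with hA
  have hdetA : A.det ≠ 0 := by rwa [Matrix.det_transpose]
  have hinv : A * A⁻¹ = 1 := Matrix.mul_nonsing_inv A (isUnit_iff_ne_zero.mpr hdetA)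
  set y := A⁻¹.mulVec p with hy
  refine ⟨y 0, y 1, y 2, ?_⟩
  have h1 : A.mulVec y = p := by
    rw [hy, Matrix.mulVec_mulVec, hinv, Matrix.one_mulVec]
  rw [← h1]
  funext i
  fin_cases i <;>
    simp [Matrix.mulVec, dotProduct, Fin.sum_univ_three, hA, Matrix.transpose_apply,
      Matrix.vecHead, Matrix.vecTail] <;> ring

lemma aux_master (D₁ D₂ D₃ : Pt ℝ) (t₁ t₂ t₃ s₁ s₂ s₃ y₁ y₂ y₃ : ℝ) :
    crossProduct ((y₁*t₁) • crossProduct D₂ D₃ + (y₂*t₂) • crossProduct D₁ D₃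
        + (y₃*t₃) • crossProduct D₁ D₂)
      ((y₁*s₁) • crossProduct D₂ D₃ + (y₂*s₂) • crossProduct D₁ D₃
        + (y₃*s₃) • crossProduct D₁ D₂)
    = det3 D₁ D₂ D₃ • ( ((t₃*s₂-t₂*s₃)*(y₂*y₃)) • D₁ + ((t₃*s₁-t₁*s₃)*(y₁*y₃)) • D₂
        + ((t₂*s₁-t₁*s₂)*(y₁*y₂)) • D₃ ) := by
  funext i
  fin_cases i <;>
    simp [crossProduct, det3, Matrix.det_fin_three] <;> ring

lemma aux_dot1 (D₁ D₂ D₃ : Pt ℝ) (y₁ y₂ y₃ : ℝ) :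
    (y₁•D₁+y₂•D₂+y₃•D₃) ⬝ᵥ (crossProduct D₂ D₃ : Pt ℝ) = y₁ * det3 D₁ D₂ D₃ := by
  simp [crossProduct, dotProduct, det3, Matrix.det_fin_three, Fin.sum_univ_three]
  ring

lemma aux_dot2 (D₁ D₂ D₃ : Pt ℝ) (y₁ y₂ y₃ : ℝ) :
    (y₁•D₁+y₂•D₂+y₃•D₃) ⬝ᵥ (crossProduct D₁ D₃ : Pt ℝ) = -(y₂ * det3 D₁ D₂ D₃) := by
  simp [crossProduct, dotProduct, det3, Matrix.det_fin_three, Fin.sum_univ_three]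
  ring

lemma aux_dot3 (D₁ D₂ D₃ : Pt ℝ) (y₁ y₂ y₃ : ℝ) :
    (y₁•D₁+y₂•D₂+y₃•D₃) ⬝ᵥ (crossProduct D₁ D₂ : Pt ℝ) = y₃ * det3 D₁ D₂ D₃ := by
  simp [crossProduct, dotProduct, det3, Matrix.det_fin_three, Fin.sum_univ_three]
  ring

lemma aux_dotl (D₁ D₂ D₃ l : Pt ℝ) (y₁ y₂ y₃ : ℝ) :
    (y₁•D₁+y₂•D₂+y₃•D₃) ⬝ᵥ l = y₁*(D₁ ⬝ᵥ l) + y₂*(D₂ ⬝ᵥ l) + y₃*(D₃ ⬝ᵥ l) := by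
  simp [add_dotProduct, smul_dotProduct, smul_eq_mul]

lemma aux_bilin (M : Matrix (Fin 3) (Fin 3) ℝ) (D₁ D₂ D₃ : Pt ℝ) (y₁ y₂ y₃ z₁ z₂ z₃ : ℝ) :
    (y₁•D₁+y₂•D₂+y₃•D₃) ⬝ᵥ M.mulVec (z₁•D₁+z₂•D₂+z₃•D₃) =
      y₁*z₁*(D₁ ⬝ᵥ M.mulVec D₁) + y₁*z₂*(D₁ ⬝ᵥ M.mulVec D₂) + y₁*z₃*(D₁ ⬝ᵥ M.mulVec D₃)
    + y₂*z₁*(D₂ ⬝ᵥ M.mulVec D₁) + y₂*z₂*(D₂ ⬝ᵥ M.mulVec D₂) + y₂*z₃*(D₂ ⬝ᵥ M.mulVec D₃)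
    + y₃*z₁*(D₃ ⬝ᵥ M.mulVec D₁) + y₃*z₂*(D₃ ⬝ᵥ M.mulVec D₂) + y₃*z₃*(D₃ ⬝ᵥ M.mulVec D₃) := by
  simp [Matrix.mulVec_add, Matrix.mulVec_smul, dotProduct_add, dotProduct_smul,
    add_dotProduct, smul_dotProduct, smul_eq_mul]
  ring

lemma aux_sym (M : Matrix (Fin 3) (Fin 3) ℝ) (h : M.IsSymm) (a b : Pt ℝ) :
    a ⬝ᵥ M.mulVec b = b ⬝ᵥ M.mulVec a := by
  rw [Matrix.dotProduct_mulVec, ← Matrix.mulVec_transpose, h.eq, dotProduct_comm]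

lemma aux_entry (M : Matrix (Fin 3) (Fin 3) ℝ) (D₁ D₂ D₃ : Pt ℝ) (i j : Fin 3) :
    ((Matrix.of ![D₁, D₂, D₃]) * M * (Matrix.of ![D₁, D₂, D₃])ᵀ) i j
      = (![D₁,D₂,D₃] i) ⬝ᵥ M.mulVec (![D₁,D₂,D₃] j) := by
  fin_cases i <;> fin_cases j <;>
    simp [Matrix.mul_apply, Matrix.mulVec, Matrix.vecMul, dotProduct, Fin.sum_univ_three,
      Matrix.vecHead, Matrix.vecTail, Matrix.transpose_apply] <;> ring

lemma aux_B (D₁ D₂ D₃ : Pt ℝ) (y₁ y₂ y₃ : ℝ) :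
    (Matrix.of ![(crossProduct D₂ D₃ : Pt ℝ), crossProduct D₁ D₃, crossProduct D₁ D₂]).mulVec
        (y₁•D₁+y₂•D₂+y₃•D₃)
      = ![y₁ * det3 D₁ D₂ D₃, -(y₂ * det3 D₁ D₂ D₃), y₃ * det3 D₁ D₂ D₃] := by
  funext i
  fin_cases i <;>
    simp [Matrix.mulVec, dotProduct, crossProduct, det3, Matrix.det_fin_three,
      Fin.sum_univ_three] <;> ring

lemma aux_qval (B N : Matrix (Fin 3) (Fin 3) ℝ) (p : Pt ℝ) :
    p ⬝ᵥ (Bᵀ * N * B).mulVec p = (B.mulVec p) ⬝ᵥ N.mulVec (B.mulVec p) := by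
  rw [Matrix.mul_assoc, ← Matrix.mulVec_mulVec, ← Matrix.mulVec_mulVec,
    Matrix.dotProduct_mulVec, Matrix.vecMul_transpose]

end Aux

set_option maxHeartbeats 1600000

/-- Let `S` be the Steiner correspondence of two nondegenerate conics `Σ₁, Σ₂` with
common self-polar triangle `Δ = {D₁, D₂, D₃}`.  If three points `P, Q, R` not on
the side lines of `Δ` are collinear, lying on a line `l` avoiding the vertices of
`Δ`, then `S(P)`, `S(Q)`, `S(R)` lie on a common conic through the three vertices
of `Δ`; and conversely `S` maps any conic through the three vertices of `Δ`
(minus those vertices) onto a line (every point of that line off the side lines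
of `Δ` being an image). -/
theorem stmt18 (M₁ M₂ : Matrix (Fin 3) (Fin 3) ℝ)
    (h₁ : NondegConic M₁) (h₂ : NondegConic M₂)
    (D₁ D₂ D₃ : Pt ℝ) (hD₁ : D₁ ≠ 0) (hD₂ : D₂ ≠ 0) (hD₃ : D₃ ≠ 0)
    (hΔ : ¬ Collinear3 D₁ D₂ D₃)
    (hsp₁ : SelfPolar M₁ D₁ D₂ D₃) (hsp₂ : SelfPolar M₂ D₁ D₂ D₃) :
    -- direct part
    (∀ (l P Q R : Pt ℝ), l ≠ 0 →
      ¬ Incid D₁ l → ¬ Incid D₂ l → ¬ Incid D₃ l →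
      P ≠ 0 → Q ≠ 0 → R ≠ 0 →
      Incid P l → Incid Q l → Incid R l →
      ¬ Incid P (lineThrough D₂ D₃) → ¬ Incid P (lineThrough D₁ D₃) →
        ¬ Incid P (lineThrough D₁ D₂) →
      ¬ Incid Q (lineThrough D₂ D₃) → ¬ Incid Q (lineThrough D₁ D₃) →
        ¬ Incid Q (lineThrough D₁ D₂) →
      ¬ Incid R (lineThrough D₂ D₃) → ¬ Incid R (lineThrough D₁ D₃) →
        ¬ Incid R (lineThrough D₁ D₂) →
      ∃ M : Matrix (Fin 3) (Fin 3) ℝ, M.IsSymm ∧ M ≠ 0 ∧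
        OnConic M D₁ ∧ OnConic M D₂ ∧ OnConic M D₃ ∧
        OnConic M (steiner M₁ M₂ P) ∧ OnConic M (steiner M₁ M₂ Q) ∧
        OnConic M (steiner M₁ M₂ R)) ∧
    -- converse part
    (∀ MC : Matrix (Fin 3) (Fin 3) ℝ, NondegConic MC →
      OnConic MC D₁ → OnConic MC D₂ → OnConic MC D₃ →
      ∃ m : Pt ℝ, m ≠ 0 ∧
        (∀ P : Pt ℝ, P ≠ 0 → OnConic MC P →
          ¬ ProjEq P D₁ → ¬ ProjEq P D₂ → ¬ ProjEq P D₃ →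
          Incid (steiner M₁ M₂ P) m) ∧
        (∀ Q : Pt ℝ, Q ≠ 0 → Incid Q m →
          ¬ Incid Q (lineThrough D₂ D₃) → ¬ Incid Q (lineThrough D₁ D₃) →
            ¬ Incid Q (lineThrough D₁ D₂) →
          ∃ P : Pt ℝ, P ≠ 0 ∧ OnConic MC P ∧ ProjEq Q (steiner M₁ M₂ P))) := by
  set δ : ℝ := det3 D₁ D₂ D₃ with hδdef
  have hδ : δ ≠ 0 := hΔ
  obtain ⟨t₁, ht₁, hM1D1⟩ := hsp₁.1
  obtain ⟨t₂, ht₂, hM1D2⟩ := hsp₁.2.1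
  obtain ⟨t₃, ht₃, hM1D3⟩ := hsp₁.2.2
  obtain ⟨s₁, hs₁, hM2D1⟩ := hsp₂.1
  obtain ⟨s₂, hs₂, hM2D2⟩ := hsp₂.2.1
  obtain ⟨s₃, hs₃, hM2D3⟩ := hsp₂.2.2
  have hM1D1' : M₁.mulVec D₁ = t₁ • (crossProduct D₂ D₃ : Pt ℝ) := hM1D1
  have hM1D2' : M₁.mulVec D₂ = t₂ • (crossProduct D₁ D₃ : Pt ℝ) := hM1D2
  have hM1D3' : M₁.mulVec D₃ = t₃ • (crossProduct D₁ D₂ : Pt ℝ) := hM1D3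
  have hM2D1' : M₂.mulVec D₁ = s₁ • (crossProduct D₂ D₃ : Pt ℝ) := hM2D1
  have hM2D2' : M₂.mulVec D₂ = s₂ • (crossProduct D₁ D₃ : Pt ℝ) := hM2D2
  have hM2D3' : M₂.mulVec D₃ = s₃ • (crossProduct D₁ D₂ : Pt ℝ) := hM2D3
  set c₁ : ℝ := t₃*s₂ - t₂*s₃ with hc₁def
  set c₂ : ℝ := t₃*s₁ - t₁*s₃ with hc₂def
  set c₃ : ℝ := t₂*s₁ - t₁*s₂ with hc₃def
  -- the key formula for the Steiner map
  have key : ∀ y₁ y₂ y₃ : ℝ, steiner M₁ M₂ (y₁•D₁+y₂•D₂+y₃•D₃)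
      = δ • ((c₁*(y₂*y₃)) • D₁ + (c₂*(y₁*y₃)) • D₂ + (c₃*(y₁*y₂)) • D₃) := by
    intro y₁ y₂ y₃
    have hexp1 : M₁.mulVec (y₁•D₁+y₂•D₂+y₃•D₃)
        = (y₁*t₁) • (crossProduct D₂ D₃ : Pt ℝ) + (y₂*t₂) • (crossProduct D₁ D₃ : Pt ℝ)
          + (y₃*t₃) • (crossProduct D₁ D₂ : Pt ℝ) := by
      simp only [Matrix.mulVec_add, Matrix.mulVec_smul, hM1D1', hM1D2', hM1D3', smul_smul]
    have hexp2 : M₂.mulVec (y₁•D₁+y₂•D₂+y₃•D₃)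
        = (y₁*s₁) • (crossProduct D₂ D₃ : Pt ℝ) + (y₂*s₂) • (crossProduct D₁ D₃ : Pt ℝ)
          + (y₃*s₃) • (crossProduct D₁ D₂ : Pt ℝ) := by
      simp only [Matrix.mulVec_add, Matrix.mulVec_smul, hM2D1', hM2D2', hM2D3', smul_smul]
    show crossProduct (M₁.mulVec _) (M₂.mulVec _) = _
    rw [hexp1, hexp2, hδdef, hc₁def, hc₂def, hc₃def]
    exact aux_master D₁ D₂ D₃ t₁ t₂ t₃ s₁ s₂ s₃ y₁ y₂ y₃
  clear_value δ c₁ c₂ c₃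
  have hδ3 : det3 D₁ D₂ D₃ ≠ 0 := hδdef ▸ hδ
  clear hM1D1 hM1D2 hM1D3 hM2D1 hM2D2 hM2D3
  clear hM1D1' hM1D2' hM1D3' hM2D1' hM2D2' hM2D3'
  have hD1c : D₁ = (1:ℝ)•D₁ + (0:ℝ)•D₂ + (0:ℝ)•D₃ := by simp
  have hD2c : D₂ = (0:ℝ)•D₁ + (1:ℝ)•D₂ + (0:ℝ)•D₃ := by simp
  have hD3c : D₃ = (0:ℝ)•D₁ + (0:ℝ)•D₂ + (1:ℝ)•D₃ := by simp
  set B : Matrix (Fin 3) (Fin 3) ℝ :=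
    Matrix.of ![(crossProduct D₂ D₃ : Pt ℝ), crossProduct D₁ D₃, crossProduct D₁ D₂] with hBdef
  have hqB : ∀ (N' : Matrix (Fin 3) (Fin 3) ℝ) (y₁ y₂ y₃ : ℝ),
      (y₁•D₁+y₂•D₂+y₃•D₃) ⬝ᵥ (Bᵀ * N' * B).mulVec (y₁•D₁+y₂•D₂+y₃•D₃)
      = (![y₁*δ, -(y₂*δ), y₃*δ] : Pt ℝ) ⬝ᵥ N'.mulVec ![y₁*δ, -(y₂*δ), y₃*δ] := by
    intro N' y₁ y₂ y₃
    rw [aux_qval, hBdef, aux_B, ← hδdef]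
  have hsymB : ∀ N' : Matrix (Fin 3) (Fin 3) ℝ, N'ᵀ = N' → (Bᵀ * N' * B).IsSymm := by
    intro N' hN'
    show (Bᵀ * N' * B)ᵀ = _
    rw [Matrix.transpose_mul, Matrix.transpose_mul, Matrix.transpose_transpose, hN',
      Matrix.mul_assoc]
  constructor
  · -- direct part
    intro l P Q R hl hD1l hD2l hD3l hP hQ hR hPl hQl hRl _ _ _ _ _ _ _ _ _
    obtain ⟨p₁, p₂, p₃, hPr⟩ := aux_repr D₁ D₂ D₃ hδ3 P
    obtain ⟨q₁, q₂, q₃, hQr⟩ := aux_repr D₁ D₂ D₃ hδ3 Q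
    obtain ⟨r₁, r₂, r₃, hRr⟩ := aux_repr D₁ D₂ D₃ hδ3 R
    have hPl' : p₁*(D₁ ⬝ᵥ l) + p₂*(D₂ ⬝ᵥ l) + p₃*(D₃ ⬝ᵥ l) = 0 := by
      rw [← aux_dotl D₁ D₂ D₃ l p₁ p₂ p₃, ← hPr]; exact hPl
    have hQl' : q₁*(D₁ ⬝ᵥ l) + q₂*(D₂ ⬝ᵥ l) + q₃*(D₃ ⬝ᵥ l) = 0 := by
      rw [← aux_dotl D₁ D₂ D₃ l q₁ q₂ q₃, ← hQr]; exact hQl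
    have hRl' : r₁*(D₁ ⬝ᵥ l) + r₂*(D₂ ⬝ᵥ l) + r₃*(D₃ ⬝ᵥ l) = 0 := by
      rw [← aux_dotl D₁ D₂ D₃ l r₁ r₂ r₃, ← hRr]; exact hRl
    by_cases hc : c₁ = 0 ∧ c₂ = 0 ∧ c₃ = 0
    · -- degenerate case : the Steiner map is identically zero
      set N₀ : Matrix (Fin 3) (Fin 3) ℝ := !![0,1,1;1,0,1;1,1,0] with hN₀def
      have hN₀T : N₀ᵀ = N₀ := by
        rw [hN₀def]
        ext i j
        fin_cases i <;> fin_cases j <;> rfl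
      refine ⟨Bᵀ * N₀ * B, hsymB N₀ hN₀T, ?_, ?_, ?_, ?_, ?_, ?_, ?_⟩
      · intro h0
        have hv : (D₂+D₃) ⬝ᵥ (Bᵀ * N₀ * B).mulVec (D₂+D₃) = 0 := by
          rw [h0]; simp
        rw [show D₂ + D₃ = (0:ℝ)•D₁ + (1:ℝ)•D₂ + (1:ℝ)•D₃ by simp, hqB] at hv
        have hv2 : (![0*δ, -(1*δ), 1*δ] : Pt ℝ) ⬝ᵥ N₀.mulVec ![0*δ, -(1*δ), 1*δ]
            = -(2*(δ*δ)) := by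
          rw [hN₀def]
          simp [dotProduct, Matrix.mulVec, Fin.sum_univ_three]
          ring
        rw [hv2] at hv
        have : δ * δ = 0 := by linarith
        exact hδ (mul_self_eq_zero.mp this)
      · show D₁ ⬝ᵥ (Bᵀ * N₀ * B).mulVec D₁ = 0
        rw [hD1c, hqB]
        rw [hN₀def]; simp [dotProduct, Matrix.mulVec, Fin.sum_univ_three]
      · show D₂ ⬝ᵥ (Bᵀ * N₀ * B).mulVec D₂ = 0
        rw [hD2c, hqB]
        rw [hN₀def]; simp [dotProduct, Matrix.mulVec, Fin.sum_univ_three]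
      · show D₃ ⬝ᵥ (Bᵀ * N₀ * B).mulVec D₃ = 0
        rw [hD3c, hqB]
        rw [hN₀def]; simp [dotProduct, Matrix.mulVec, Fin.sum_univ_three]
      · have hz : steiner M₁ M₂ P = 0 := by
          rw [hPr, key, hc.1, hc.2.1, hc.2.2]; simp
        rw [hz]; show (0 : Pt ℝ) ⬝ᵥ _ = 0; simp
      · have hz : steiner M₁ M₂ Q = 0 := by
          rw [hQr, key, hc.1, hc.2.1, hc.2.2]; simp
        rw [hz]; show (0 : Pt ℝ) ⬝ᵥ _ = 0; simp
      · have hz : steiner M₁ M₂ R = 0 := by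
          rw [hRr, key, hc.1, hc.2.1, hc.2.2]; simp
        rw [hz]; show (0 : Pt ℝ) ⬝ᵥ _ = 0; simp
    · -- main case : some cᵢ ≠ 0
      set e₁ : ℝ := (D₁ ⬝ᵥ l) * c₁ with he₁def
      set e₂ : ℝ := (D₂ ⬝ᵥ l) * c₂ with he₂def
      set e₃ : ℝ := (D₃ ⬝ᵥ l) * c₃ with he₃def
      set N : Matrix (Fin 3) (Fin 3) ℝ := !![0, -e₃, e₂; -e₃, 0, -e₁; e₂, -e₁, 0] with hNdef
      have hNT : Nᵀ = N := by
        rw [hNdef]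
        ext i j
        fin_cases i <;> fin_cases j <;> rfl
      have hval : ∀ (y₁ y₂ y₃ : ℝ),
          (![y₁*δ, -(y₂*δ), y₃*δ] : Pt ℝ) ⬝ᵥ N.mulVec ![y₁*δ, -(y₂*δ), y₃*δ]
          = 2*(δ*δ)*(e₃*(y₁*y₂) + e₂*(y₁*y₃) + e₁*(y₂*y₃)) := by
        intro y₁ y₂ y₃
        rw [hNdef]
        simp [dotProduct, Matrix.mulVec, Fin.sum_univ_three]
        ring
      have honc : ∀ (S : Pt ℝ) (y₁ y₂ y₃ : ℝ), S = y₁•D₁+y₂•D₂+y₃•D₃ →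
          y₁*(D₁ ⬝ᵥ l) + y₂*(D₂ ⬝ᵥ l) + y₃*(D₃ ⬝ᵥ l) = 0 →
          OnConic (Bᵀ * N * B) (steiner M₁ M₂ S) := by
        intro S y₁ y₂ y₃ hSr hSl
        show _ ⬝ᵥ _ = 0
        rw [hSr, key, Matrix.mulVec_smul, dotProduct_smul, smul_dotProduct, hqB, hval,
          he₁def, he₂def, he₃def, smul_eq_mul, smul_eq_mul]
        linear_combination (2*δ^4*c₁*c₂*c₃*y₁*y₂*y₃) * hSl
      refine ⟨Bᵀ * N * B, hsymB N hNT, ?_, ?_, ?_, ?_,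
        honc P p₁ p₂ p₃ hPr hPl', honc Q q₁ q₂ q₃ hQr hQl', honc R r₁ r₂ r₃ hRr hRl'⟩
      · intro h0
        have hzero : ∀ p : Pt ℝ, p ⬝ᵥ (Bᵀ * N * B).mulVec p = 0 := by
          intro p; rw [h0]; simp
        have hδδ : δ * δ ≠ 0 := mul_ne_zero hδ hδ
        rcases (by tauto : c₁ ≠ 0 ∨ c₂ ≠ 0 ∨ c₃ ≠ 0) with h | h | h
        · have hv := hzero (D₂ + D₃)
          rw [show D₂ + D₃ = (0:ℝ)•D₁ + (1:ℝ)•D₂ + (1:ℝ)•D₃ by simp, hqB, hval] at hv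
          have : (2:ℝ)*(δ*δ)*(e₃*(0*1) + e₂*(0*1) + e₁*(1*1)) = 2*(δ*δ)*e₁ := by ring
          rw [this] at hv
          exact (mul_ne_zero (mul_ne_zero two_ne_zero hδδ)
            (he₁def ▸ mul_ne_zero hD1l h)) hv
        · have hv := hzero (D₁ + D₃)
          rw [show D₁ + D₃ = (1:ℝ)•D₁ + (0:ℝ)•D₂ + (1:ℝ)•D₃ by simp, hqB, hval] at hv
          have : (2:ℝ)*(δ*δ)*(e₃*(1*0) + e₂*(1*1) + e₁*(0*1)) = 2*(δ*δ)*e₂ := by ring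
          rw [this] at hv
          exact (mul_ne_zero (mul_ne_zero two_ne_zero hδδ)
            (he₂def ▸ mul_ne_zero hD2l h)) hv
        · have hv := hzero (D₁ + D₂)
          rw [show D₁ + D₂ = (1:ℝ)•D₁ + (1:ℝ)•D₂ + (0:ℝ)•D₃ by simp, hqB, hval] at hv
          have : (2:ℝ)*(δ*δ)*(e₃*(1*1) + e₂*(1*0) + e₁*(1*0)) = 2*(δ*δ)*e₃ := by ring
          rw [this] at hv
          exact (mul_ne_zero (mul_ne_zero two_ne_zero hδδ)
            (he₃def ▸ mul_ne_zero hD3l h)) hv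
      · show D₁ ⬝ᵥ (Bᵀ * N * B).mulVec D₁ = 0
        rw [hD1c, hqB, hval]; ring
      · show D₂ ⬝ᵥ (Bᵀ * N * B).mulVec D₂ = 0
        rw [hD2c, hqB, hval]; ring
      · show D₃ ⬝ᵥ (Bᵀ * N * B).mulVec D₃ = 0
        rw [hD3c, hqB, hval]; ring
  · -- converse part
    intro MC hMC hC1 hC2 hC3
    have hC1' : D₁ ⬝ᵥ MC.mulVec D₁ = 0 := hC1
    have hC2' : D₂ ⬝ᵥ MC.mulVec D₂ = 0 := hC2
    have hC3' : D₃ ⬝ᵥ MC.mulVec D₃ = 0 := hC3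
    have hsymMC := aux_sym MC hMC.1
    by_cases hc1 : c₁ = 0
    · refine ⟨lineThrough D₂ D₃, ?_, ?_, ?_⟩
      · intro h0
        have h' : D₁ ⬝ᵥ (crossProduct D₂ D₃ : Pt ℝ) = 0 := by
          show D₁ ⬝ᵥ (lineThrough D₂ D₃) = 0; rw [h0]; simp
        rw [hD1c, aux_dot1, ← hδdef] at h'
        simp at h'; exact hδ h'
      · intro P hP hPC _ _ _
        obtain ⟨y₁, y₂, y₃, hPr⟩ := aux_repr D₁ D₂ D₃ hδ3 P
        show _ ⬝ᵥ _ = 0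
        rw [hPr, key]
        show (δ • _) ⬝ᵥ (crossProduct D₂ D₃ : Pt ℝ) = 0
        rw [smul_dotProduct, aux_dot1, hc1]
        simp
      · intro Q hQ hQm hQs1 _ _
        exact absurd hQm hQs1
    · by_cases hc2 : c₂ = 0
      · refine ⟨lineThrough D₁ D₃, ?_, ?_, ?_⟩
        · intro h0
          have h' : D₂ ⬝ᵥ (crossProduct D₁ D₃ : Pt ℝ) = 0 := by
            show D₂ ⬝ᵥ (lineThrough D₁ D₃) = 0; rw [h0]; simp
          rw [hD2c, aux_dot2, ← hδdef] at h'
          simp at h'; exact hδ h'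
        · intro P hP hPC _ _ _
          obtain ⟨y₁, y₂, y₃, hPr⟩ := aux_repr D₁ D₂ D₃ hδ3 P
          show _ ⬝ᵥ _ = 0
          rw [hPr, key]
          show (δ • _) ⬝ᵥ (crossProduct D₁ D₃ : Pt ℝ) = 0
          rw [smul_dotProduct, aux_dot2, hc2]
          simp
        · intro Q hQ hQm _ hQs2 _
          exact absurd hQm hQs2
      · by_cases hc3 : c₃ = 0
        · refine ⟨lineThrough D₁ D₂, ?_, ?_, ?_⟩
          · intro h0
            have h' : D₃ ⬝ᵥ (crossProduct D₁ D₂ : Pt ℝ) = 0 := by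
              show D₃ ⬝ᵥ (lineThrough D₁ D₂) = 0; rw [h0]; simp
            rw [hD3c, aux_dot3, ← hδdef] at h'
            simp at h'; exact hδ h'
          · intro P hP hPC _ _ _
            obtain ⟨y₁, y₂, y₃, hPr⟩ := aux_repr D₁ D₂ D₃ hδ3 P
            show _ ⬝ᵥ _ = 0
            rw [hPr, key]
            show (δ • _) ⬝ᵥ (crossProduct D₁ D₂ : Pt ℝ) = 0
            rw [smul_dotProduct, aux_dot3, hc3]
            simp
          · intro Q hQ hQm _ _ hQs3
            exact absurd hQm hQs3
        · -- fully nondegenerate case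
          set m₁ : ℝ := D₂ ⬝ᵥ MC.mulVec D₃ with hm₁def
          set m₂ : ℝ := D₁ ⬝ᵥ MC.mulVec D₃ with hm₂def
          set m₃ : ℝ := D₁ ⬝ᵥ MC.mulVec D₂ with hm₃def
          have hdet1 : ((Matrix.of ![D₁, D₂, D₃]) * MC * (Matrix.of ![D₁, D₂, D₃])ᵀ).det
              = δ * MC.det * δ := by
            rw [Matrix.det_mul, Matrix.det_mul, Matrix.det_transpose, hδdef]; rfl
          have hdet2 : ((Matrix.of ![D₁, D₂, D₃]) * MC * (Matrix.of ![D₁, D₂, D₃])ᵀ).det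
              = 2*m₁*m₂*m₃ := by
            rw [Matrix.det_fin_three]
            simp only [aux_entry]
            simp only [Matrix.cons_val_zero, Matrix.cons_val_one, Matrix.head_cons,
              Matrix.cons_val_two, Matrix.tail_cons]
            rw [hC1', hC2', hC3', hsymMC D₂ D₁, hsymMC D₃ D₁, hsymMC D₃ D₂,
              ← hm₁def, ← hm₂def, ← hm₃def]
            ring
          have hm123 : 2*m₁*m₂*m₃ ≠ 0 := by
            rw [← hdet2, hdet1]
            exact mul_ne_zero (mul_ne_zero hδ hMC.2) hδ
          have hm₁ : m₁ ≠ 0 := fun h => hm123 (by rw [h]; ring)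
          have hm₂ : m₂ ≠ 0 := fun h => hm123 (by rw [h]; ring)
          have hm₃ : m₃ ≠ 0 := fun h => hm123 (by rw [h]; ring)
          clear_value m₁ m₂ m₃
          set m : Pt ℝ := (m₁*c₂*c₃) • (crossProduct D₂ D₃ : Pt ℝ)
            + (-(m₂*c₁*c₃)) • (crossProduct D₁ D₃ : Pt ℝ)
            + (m₃*c₁*c₂) • (crossProduct D₁ D₂ : Pt ℝ) with hmdef
          have hdotm : ∀ y₁ y₂ y₃ : ℝ, (y₁•D₁+y₂•D₂+y₃•D₃) ⬝ᵥ m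
              = δ*(m₁*c₂*c₃*y₁ + m₂*c₁*c₃*y₂ + m₃*c₁*c₂*y₃) := by
            intro y₁ y₂ y₃
            rw [hmdef]
            simp only [dotProduct_add, dotProduct_smul, aux_dot1, aux_dot2, aux_dot3,
              smul_eq_mul, ← hδdef]
            ring
          refine ⟨m, ?_, ?_, ?_⟩
          · intro h0
            have h' : D₁ ⬝ᵥ m = 0 := by rw [h0]; simp
            rw [hD1c, hdotm] at h'
            rcases mul_eq_zero.mp h' with h | h
            · exact hδ h
            · have : m₁*c₂*c₃ = 0 := by linarith
              rcases mul_eq_zero.mp this with h'' | h''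
              · rcases mul_eq_zero.mp h'' with h3 | h3
                · exact hm₁ h3
                · exact hc2 h3
              · exact hc3 h''
          · intro P hP hPC _ _ _
            obtain ⟨y₁, y₂, y₃, hPr⟩ := aux_repr D₁ D₂ D₃ hδ3 P
            have hPC' : y₁*y₁*(D₁ ⬝ᵥ MC.mulVec D₁) + y₁*y₂*(D₁ ⬝ᵥ MC.mulVec D₂)
                + y₁*y₃*(D₁ ⬝ᵥ MC.mulVec D₃)
                + y₂*y₁*(D₂ ⬝ᵥ MC.mulVec D₁) + y₂*y₂*(D₂ ⬝ᵥ MC.mulVec D₂)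
                + y₂*y₃*(D₂ ⬝ᵥ MC.mulVec D₃)
                + y₃*y₁*(D₃ ⬝ᵥ MC.mulVec D₁) + y₃*y₂*(D₃ ⬝ᵥ MC.mulVec D₂)
                + y₃*y₃*(D₃ ⬝ᵥ MC.mulVec D₃) = 0 := by
              rw [← aux_bilin MC D₁ D₂ D₃ y₁ y₂ y₃ y₁ y₂ y₃, ← hPr]; exact hPC
            rw [hC1', hC2', hC3', hsymMC D₂ D₁, hsymMC D₃ D₁, hsymMC D₃ D₂,
              ← hm₁def, ← hm₂def, ← hm₃def] at hPC'
            have hPc : m₁*(y₂*y₃) + m₂*(y₁*y₃) + m₃*(y₁*y₂) = 0 := by linarith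
            show _ ⬝ᵥ _ = 0
            rw [hPr, key]
            show (δ • ((c₁*(y₂*y₃)) • D₁ + (c₂*(y₁*y₃)) • D₂ + (c₃*(y₁*y₂)) • D₃)) ⬝ᵥ m = 0
            rw [smul_dotProduct, hdotm, smul_eq_mul]
            linear_combination (δ*δ*c₁*c₂*c₃) * hPc
          · intro Q hQ hQm hQs1 hQs2 hQs3
            obtain ⟨u₁, u₂, u₃, hQr⟩ := aux_repr D₁ D₂ D₃ hδ3 Q
            have hu₁ : u₁ ≠ 0 := by
              intro h
              apply hQs1
              show Q ⬝ᵥ (crossProduct D₂ D₃ : Pt ℝ) = 0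
              rw [hQr, aux_dot1, h, zero_mul]
            have hu₂ : u₂ ≠ 0 := by
              intro h
              apply hQs2
              show Q ⬝ᵥ (crossProduct D₁ D₃ : Pt ℝ) = 0
              rw [hQr, aux_dot2, h, zero_mul, neg_zero]
            have hu₃ : u₃ ≠ 0 := by
              intro h
              apply hQs3
              show Q ⬝ᵥ (crossProduct D₁ D₂ : Pt ℝ) = 0
              rw [hQr, aux_dot3, h, zero_mul]
            have hE : m₁*c₂*c₃*u₁ + m₂*c₁*c₃*u₂ + m₃*c₁*c₂*u₃ = 0 := by
              have h' : Q ⬝ᵥ m = 0 := hQm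
              rw [hQr, hdotm] at h'
              exact (mul_eq_zero.mp h').resolve_left hδ
            refine ⟨(c₁*(u₂*u₃))•D₁ + (c₂*(u₁*u₃))•D₂ + (c₃*(u₁*u₂))•D₃, ?_, ?_, ?_⟩
            · intro h0
              have h' : ((c₁*(u₂*u₃))•D₁ + (c₂*(u₁*u₃))•D₂ + (c₃*(u₁*u₂))•D₃)
                  ⬝ᵥ (crossProduct D₂ D₃ : Pt ℝ) = 0 := by rw [h0]; simp
              rw [aux_dot1, ← hδdef] at h'
              rcases mul_eq_zero.mp h' with h | h
              · rcases mul_eq_zero.mp h with h' | h'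
                · exact hc1 h'
                · rcases mul_eq_zero.mp h' with h'' | h''
                  · exact hu₂ h''
                  · exact hu₃ h''
              · exact hδ h
            · show _ ⬝ᵥ _ = 0
              rw [aux_bilin MC D₁ D₂ D₃ _ _ _ _ _ _,
                hC1', hC2', hC3', hsymMC D₂ D₁, hsymMC D₃ D₁, hsymMC D₃ D₂,
                ← hm₁def, ← hm₂def, ← hm₃def]
              linear_combination (2*u₁*u₂*u₃) * hE
            · refine ⟨δ*(c₁*c₂*c₃*(u₁*u₂*u₃)), ?_, ?_⟩
              · exact mul_ne_zero hδ (mul_ne_zero (mul_ne_zero (mul_ne_zero hc1 hc2) hc3)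
                  (mul_ne_zero (mul_ne_zero hu₁ hu₂) hu₃))
              · rw [key, hQr]
                funext i
                simp only [Pi.smul_apply, Pi.add_apply, smul_eq_mul]
                ring
end
end
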